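/- arXiv:2506.00763 — 8 statements merged into one kernel-verified Lean document; each statement's English description precedes it below -/
import Mathlib

section
/- Let G be a group and S ⊆ G a symmetric generating set (i.e. 1 ∈ S and S = S⁻¹). If G admits a presentation with generating set S whose relators are all words of length at most ℓ, then S^⌊(ℓ+2)/3⌋ is a defining set: G is presented with generating set S^⌊(ℓ+2)/3⌋ and relations {abc⁻¹ : a,b,c ∈ S^⌊(ℓ+2)/3⌋, ab = c in G}. -/
open Pointwise

namespace Stmt0Aux

variable {G : Type} [Group G]

lemma list_prod_mem_pow (S : Set G) :
    ∀ (L : List G), (∀ x ∈ L, x ∈ S) → L.prod ∈ S ^ L.length := by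
  intro L
  induction L with
  | nil => intro _; simp [Set.mem_one]
  | cons x L ih =>
    intro h
    rw [List.prod_cons, List.length_cons, pow_succ']
    exact Set.mul_mem_mul (h x (by simp)) (ih fun y hy => h y (by simp [hy]))

lemma exists_list_of_mem_pow (S : Set G) :
    ∀ (n : ℕ) (x : G), x ∈ S ^ n →
      ∃ L : List G, (∀ y ∈ L, y ∈ S) ∧ L.length = n ∧ L.prod = x := by
  intro n
  induction n with
  | zero => intro x hx; rw [pow_zero] at hx; exact ⟨[], by simp, by simp, by simpa using hx.symm⟩
  | succ n ih =>
    intro x hx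
    rw [pow_succ] at hx
    obtain ⟨y, hy, s, hs, rfl⟩ := Set.mem_mul.mp hx
    obtain ⟨L, hL, hlen, hprod⟩ := ih y hy
    exact ⟨L ++ [s], by
      intro z hz
      rcases List.mem_append.mp hz with h | h
      · exact hL z h
      · simpa using (List.mem_singleton.mp h) ▸ hs, by simp [hlen], by simp [hprod]⟩

lemma inv_mem_pow (S : Set G) (hsymm : ∀ s ∈ S, s⁻¹ ∈ S) :
    ∀ (n : ℕ) (x : G), x ∈ S ^ n → x⁻¹ ∈ S ^ n := by
  intro n
  induction n with
  | zero => intro x hx; rw [pow_zero] at hx ⊢; simp_all [Set.mem_one]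
  | succ n ih =>
    intro x hx
    rw [pow_succ] at hx
    obtain ⟨y, hy, s, hs, rfl⟩ := Set.mem_mul.mp hx
    rw [mul_inv_rev, pow_succ']
    exact Set.mul_mem_mul (hsymm s hs) (ih y hy)

lemma chunk (S : Set G) (k : ℕ) {H : Type} [Group H] (g : G → H)
    (hg1 : g 1 = 1)
    (hgmul : ∀ x y, x ∈ S ^ k → y ∈ S ^ k → x * y ∈ S ^ k → g x * g y = g (x * y))
    (h1 : (1 : G) ∈ S) :
    ∀ L : List G, (∀ x ∈ L, x ∈ S) → L.length ≤ k → (L.map g).prod = g L.prod := by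
  intro L
  induction L with
  | nil => intro _ _; simpa using hg1.symm
  | cons x L ih =>
    intro hmem hlen
    have hxS : x ∈ S := hmem x (by simp)
    have hLS : ∀ y ∈ L, y ∈ S := fun y hy => hmem y (by simp [hy])
    have hlen' : L.length ≤ k := by simp at hlen; omega
    have hk1 : 1 ≤ k := by simp at hlen; omega
    have hxk : x ∈ S ^ k := by
      have := Set.pow_subset_pow_right h1 hk1
      rw [pow_one] at this; exact this hxS
    have hLk : L.prod ∈ S ^ k :=
      Set.pow_subset_pow_right h1 hlen' (list_prod_mem_pow S L hLS)
    have hxLk : x * L.prod ∈ S ^ k := by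
      have : x * L.prod ∈ S ^ (L.length + 1) := by
        rw [pow_succ']
        exact Set.mul_mem_mul hxS (list_prod_mem_pow S L hLS)
      exact Set.pow_subset_pow_right h1 (by simp at hlen; omega) this
    rw [List.map_cons, List.prod_cons, List.prod_cons, ih hLS hlen', hgmul _ _ hxk hLk hxLk]

lemma main3 (S : Set G) (k : ℕ) (h1 : (1 : G) ∈ S) (hsymm : ∀ s ∈ S, s⁻¹ ∈ S)
    {H : Type} [Group H] (g : G → H)
    (hg1 : g 1 = 1)
    (hgmul : ∀ x y, x ∈ S ^ k → y ∈ S ^ k → x * y ∈ S ^ k → g x * g y = g (x * y)) :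
    ∀ L : List G, (∀ x ∈ L, x ∈ S) → L.length ≤ 3 * k → L.prod = 1 →
      (L.map g).prod = 1 := by
  intro L hmem hlen hprod
  set A := L.take k with hA
  set L1 := L.drop k with hL1
  set B := L1.take k with hB
  set C := L1.drop k with hC
  have hsplit : L = A ++ (B ++ C) := by rw [hB, hC, List.take_append_drop, hA, hL1, List.take_append_drop]
  have hAS : ∀ x ∈ A, x ∈ S := fun x hx => hmem x (List.take_subset _ _ hx)
  have hBS : ∀ x ∈ B, x ∈ S := fun x hx => hmem x (List.drop_subset _ _ (List.take_subset _ _ hx))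
  have hCS : ∀ x ∈ C, x ∈ S := fun x hx => hmem x (List.drop_subset _ _ (List.drop_subset _ _ hx))
  have hAlen : A.length ≤ k := by simp [hA]
  have hBlen : B.length ≤ k := by simp [hB]
  have hClen : C.length ≤ k := by simp [hC, hL1]; omega
  have ha : A.prod ∈ S ^ k := Set.pow_subset_pow_right h1 hAlen (list_prod_mem_pow S A hAS)
  have hb : B.prod ∈ S ^ k := Set.pow_subset_pow_right h1 hBlen (list_prod_mem_pow S B hBS)
  have hc : C.prod ∈ S ^ k := Set.pow_subset_pow_right h1 hClen (list_prod_mem_pow S C hCS)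
  have habc : A.prod * (B.prod * C.prod) = 1 := by
    rw [← List.prod_append, ← List.prod_append, ← hsplit]; exact hprod
  have hab : A.prod * B.prod ∈ S ^ k := by
    have hcinv : (C.prod)⁻¹ ∈ S ^ k := inv_mem_pow S hsymm k _ hc
    have heq : A.prod * B.prod = (C.prod)⁻¹ := by
      apply eq_inv_of_mul_eq_one_left
      rw [mul_assoc]; exact habc
    rw [heq]; exact hcinv
  have habck : (A.prod * B.prod) * C.prod ∈ S ^ k := by
    rw [mul_assoc, habc]; exact Set.one_mem_pow h1
  calc (L.map g).prod = (A.map g).prod * ((B.map g).prod * (C.map g).prod) := by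
        rw [hsplit, List.map_append, List.map_append, List.prod_append, List.prod_append]
    _ = g A.prod * (g B.prod * g C.prod) := by
        rw [chunk S k g hg1 hgmul h1 A hAS hAlen, chunk S k g hg1 hgmul h1 B hBS hBlen,
          chunk S k g hg1 hgmul h1 C hCS hClen]
    _ = 1 := by
        rw [← mul_assoc, hgmul _ _ ha hb hab, hgmul _ _ hab hc habck, mul_assoc, habc, hg1]

end Stmt0Aux
namespace Stmt0Aux

lemma pmap_of_prod {G : Type} [Group G] {S : Set G} {H : Type} [Group H]
    (F : FreeGroup ↥S →* H) (g' : G → H)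
    (hg' : ∀ (x : G) (h : x ∈ S), F (FreeGroup.of ⟨x, h⟩) = g' x) :
    ∀ (L : List G) (hL : ∀ x ∈ L, x ∈ S),
      F ((L.pmap (fun x hx => FreeGroup.of (⟨x, hx⟩ : ↥S)) hL).prod) =
        (L.map g').prod := by
  intro L
  induction L with
  | nil => intro _; simp
  | cons x L ih =>
    intro hL
    rw [List.pmap, List.prod_cons, List.map_cons, List.prod_cons, map_mul,
      ih (fun y hy => hL y (by simp [hy])), hg' x (hL x (by simp))]

end Stmt0Aux

open Pointwise

/-- If a group `G` admits a presentation with symmetric generating set `S`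
whose relators all have length at most `ℓ`, then `T = S ^ ⌊(ℓ+2)/3⌋` is a defining set:
`G` is presented with generating set `T` and relations `{a b c⁻¹ : a, b, c ∈ T, a * b = c}`. -/
theorem stmt0 {G : Type} [Group G] (S : Set G) (ℓ : ℕ)
    (h1 : (1 : G) ∈ S) (hsymm : ∀ s ∈ S, s⁻¹ ∈ S)
    (hgen : Subgroup.closure S = ⊤)
    (R : Set (FreeGroup ↥S))
    (hlen : ∀ w ∈ R, ∃ L : List (↥S × Bool), L.length ≤ ℓ ∧ w = FreeGroup.mk L)
    (hsurj : Function.Surjective (FreeGroup.lift (Subtype.val : ↥S → G)))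
    (hker : (FreeGroup.lift (Subtype.val : ↥S → G)).ker = Subgroup.normalClosure R) :
    Function.Surjective (FreeGroup.lift (Subtype.val : ↥(S ^ ((ℓ + 2) / 3)) → G)) ∧
    (FreeGroup.lift (Subtype.val : ↥(S ^ ((ℓ + 2) / 3)) → G)).ker =
      Subgroup.normalClosure
        {w : FreeGroup ↥(S ^ ((ℓ + 2) / 3)) |
          ∃ a b c : ↥(S ^ ((ℓ + 2) / 3)), (a : G) * (b : G) = (c : G) ∧
            w = FreeGroup.of a * FreeGroup.of b * (FreeGroup.of c)⁻¹} := by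
  classical
  -- dispose of the degenerate case ℓ = 0
  rcases Nat.eq_zero_or_pos ℓ with hℓ0 | hℓ1
  · exfalso
    subst hℓ0
    have hR1 : R ⊆ ((⊥ : Subgroup (FreeGroup ↥S)) : Set (FreeGroup ↥S)) := by
      intro w hw
      obtain ⟨L, hL, rfl⟩ := hlen w hw
      have : L = [] := List.eq_nil_of_length_eq_zero (Nat.le_zero.mp hL)
      subst this
      simp [Subgroup.mem_bot]
      rfl
    have hNbot : Subgroup.normalClosure R ≤ ⊥ := Subgroup.normalClosure_le_normal hR1
    have hmem : FreeGroup.of (⟨1, h1⟩ : ↥S) ∈ (FreeGroup.lift (Subtype.val : ↥S → G)).ker := by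
      simp [MonoidHom.mem_ker]
    rw [hker] at hmem
    exact FreeGroup.of_ne_one _ (Subgroup.mem_bot.mp (hNbot hmem))
  set k := (ℓ + 2) / 3 with hkdef
  have hk1 : 1 ≤ k := by omega
  have hk3 : ℓ ≤ 3 * k := by omega
  have hsub : S ⊆ S ^ k := by
    have := Set.pow_subset_pow_right h1 hk1
    rwa [pow_one] at this
  constructor
  · -- surjectivity
    rw [← MonoidHom.range_eq_top, FreeGroup.range_lift_eq_closure, Subtype.range_val,
      eq_top_iff, ← hgen]
    exact Subgroup.closure_mono hsub
  -- kernel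
  set Rel : Set (FreeGroup ↥(S ^ k)) :=
    {w : FreeGroup ↥(S ^ k) |
      ∃ a b c : ↥(S ^ k), (a : G) * (b : G) = (c : G) ∧
        w = FreeGroup.of a * FreeGroup.of b * (FreeGroup.of c)⁻¹} with hRel
  set N := Subgroup.normalClosure Rel with hN
  apply le_antisymm
  · -- ker ≤ normalClosure Rel
    intro w hw
    set π : FreeGroup ↥(S ^ k) →* FreeGroup ↥(S ^ k) ⧸ N := QuotientGroup.mk' N with hπ
    have htri : ∀ a b c : ↥(S ^ k), (a : G) * (b : G) = (c : G) →
        π (FreeGroup.of a) * π (FreeGroup.of b) = π (FreeGroup.of c) := by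
      intro a b c h
      have hmem : FreeGroup.of a * FreeGroup.of b * (FreeGroup.of c)⁻¹ ∈ N :=
        Subgroup.subset_normalClosure ⟨a, b, c, h, rfl⟩
      rw [← QuotientGroup.ker_mk' N, MonoidHom.mem_ker] at hmem
      rw [map_mul, map_mul, map_inv] at hmem
      exact mul_inv_eq_one.mp hmem
    set g : G → FreeGroup ↥(S ^ k) ⧸ N :=
      fun x => if h : x ∈ S ^ k then π (FreeGroup.of ⟨x, h⟩) else 1 with hg
    have hgval : ∀ (x : G) (h : x ∈ S ^ k), g x = π (FreeGroup.of ⟨x, h⟩) := by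
      intro x h; rw [hg]; exact dif_pos h
    have hgmul : ∀ x y, x ∈ S ^ k → y ∈ S ^ k → x * y ∈ S ^ k → g x * g y = g (x * y) := by
      intro x y hx hy hxy
      rw [hgval x hx, hgval y hy, hgval _ hxy]
      exact htri ⟨x, hx⟩ ⟨y, hy⟩ ⟨x * y, hxy⟩ rfl
    have hg1 : g 1 = 1 := by
      have h1k : (1 : G) ∈ S ^ k := Set.one_mem_pow h1
      have := hgmul 1 1 h1k h1k (by rwa [mul_one])
      rw [mul_one] at this
      exact mul_left_cancel (this.trans (mul_one (g 1)).symm)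
    have hginv : ∀ s ∈ S, g s⁻¹ = (g s)⁻¹ := by
      intro s hs
      apply eq_inv_of_mul_eq_one_left
      rw [hgmul s⁻¹ s (hsub (hsymm s hs)) (hsub hs) (by rw [inv_mul_cancel]; exact Set.one_mem_pow h1),
        inv_mul_cancel, hg1]
    -- ψ₀ : FreeGroup S →* Q
    set ψ : FreeGroup ↥S →* FreeGroup ↥(S ^ k) ⧸ N :=
      FreeGroup.lift (fun s : ↥S => g s.val) with hψ
    -- relators die in Q
    have hψR : ∀ r ∈ R, ψ r = 1 := by
      intro r hr
      obtain ⟨L, hLlen, rfl⟩ := hlen r hr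
      rw [hψ, FreeGroup.lift_mk]
      set L' : List G := L.map (fun x => cond x.2 (x.1 : G) (x.1 : G)⁻¹) with hL'
      have hmapeq : L.map (fun x => cond x.2 (g x.1) (g x.1)⁻¹) = L'.map g := by
        rw [hL', List.map_map]
        apply List.map_congr_left
        rintro ⟨s, b⟩ _
        cases b with
        | true => simp
        | false => simp [hginv s s.2]
      have hL'S : ∀ x ∈ L', x ∈ S := by
        intro x hx
        rw [hL'] at hx
        obtain ⟨y, _, rfl⟩ := List.mem_map.mp hx
        cases y.2 with
        | true => exact y.1.2
        | false => exact hsymm y.1 y.1.2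
      have hL'len : L'.length ≤ 3 * k := by
        rw [hL', List.length_map]; omega
      have hL'prod : L'.prod = 1 := by
        have hrk : FreeGroup.mk L ∈ (FreeGroup.lift (Subtype.val : ↥S → G)).ker := by
          rw [hker]; exact Subgroup.subset_normalClosure hr
        rw [MonoidHom.mem_ker, FreeGroup.lift_mk] at hrk
        rw [hL']
        exact hrk
      rw [hmapeq]
      exact Stmt0Aux.main3 S k h1 hsymm g hg1 hgmul L' hL'S hL'len hL'prod
    -- decomposition map χ : FreeGroup (S^k) →* FreeGroup S
    choose Lw hLwS hLwlen hLwprod using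
      fun t : ↥(S ^ k) => Stmt0Aux.exists_list_of_mem_pow S k t.1 t.2
    set σ : ↥(S ^ k) → FreeGroup ↥S :=
      fun t => ((Lw t).pmap (fun x hx => FreeGroup.of (⟨x, hx⟩ : ↥S)) (hLwS t)).prod with hσ
    set χ : FreeGroup ↥(S ^ k) →* FreeGroup ↥S := FreeGroup.lift σ with hχ
    have hcomp1 : (FreeGroup.lift (Subtype.val : ↥S → G)).comp χ =
        FreeGroup.lift (Subtype.val : ↥(S ^ k) → G) := by
      apply FreeGroup.ext_hom
      intro t
      rw [MonoidHom.comp_apply, hχ, FreeGroup.lift_apply_of, FreeGroup.lift_apply_of, hσ]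
      rw [Stmt0Aux.pmap_of_prod _ id (fun x h => by rw [FreeGroup.lift_apply_of]; rfl) (Lw t) (hLwS t)]
      rw [List.map_id, hLwprod t]
    have hcomp2 : ψ.comp χ = QuotientGroup.mk' N := by
      apply FreeGroup.ext_hom
      intro t
      rw [MonoidHom.comp_apply, hχ, FreeGroup.lift_apply_of, hσ]
      rw [Stmt0Aux.pmap_of_prod ψ g (fun x h => by rw [hψ, FreeGroup.lift_apply_of]) (Lw t) (hLwS t)]
      rw [Stmt0Aux.chunk S k g hg1 hgmul h1 (Lw t) (hLwS t) (le_of_eq (hLwlen t)),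
        hLwprod t, hgval t.1 t.2]
    -- finish
    have hχw : χ w ∈ (FreeGroup.lift (Subtype.val : ↥S → G)).ker := by
      rw [MonoidHom.mem_ker, ← MonoidHom.comp_apply, hcomp1]
      exact hw
    rw [hker] at hχw
    have hRker : Subgroup.normalClosure R ≤ ψ.ker :=
      Subgroup.normalClosure_le_normal (fun r hr => hψR r hr)
    have : ψ (χ w) = 1 := hRker hχw
    rw [← MonoidHom.comp_apply, hcomp2] at this
    rwa [← QuotientGroup.ker_mk' N, MonoidHom.mem_ker]
  · -- normalClosure Rel ≤ ker
    apply Subgroup.normalClosure_le_normal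
    rintro w ⟨a, b, c, habc, rfl⟩
    have : (FreeGroup.lift (Subtype.val : ↥(S ^ k) → G))
        (FreeGroup.of a * FreeGroup.of b * (FreeGroup.of c)⁻¹) = 1 := by
      rw [map_mul, map_mul, map_inv, FreeGroup.lift_apply_of, FreeGroup.lift_apply_of, FreeGroup.lift_apply_of,
        habc, mul_inv_cancel]
    exact this
end

section
/- Let ‖·‖ be a norm on ℝⁿ and α : ℝⁿ → ℝⁿ a linear isomorphism such that ‖v‖₂/√n ≤ ‖α v‖ ≤ ‖v‖₂ for all v ∈ ℝⁿ (where ‖·‖₂ is the Euclidean norm). Fix constants D, C > 0 and set M = 2n³(2D + C). Let v₁, …, vₙ be an orthogonal basis of ℝⁿ with ‖vᵢ‖₂ = M for each i, and let g₁, …, gₙ ∈ ℤⁿ satisfy ‖gᵢ − α vᵢ‖ ≤ n(2D + C) for each i. Then {g₁, …, gₙ} is linearly independent over ℝ, and every nonzero element g of the subgroup of ℤⁿ generated by g₁, …, gₙ satisfies ‖α⁻¹ g‖₂ ≥ D + C. -/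
lemma orth_norm_sq {n : ℕ} (v : Fin n → EuclideanSpace ℝ (Fin n))
    (hortho : ∀ i j, i ≠ j → (inner ℝ (v i) (v j) : ℝ) = 0) (c : Fin n → ℝ) :
    ‖∑ i, c i • v i‖ ^ 2 = ∑ i, (c i) ^ 2 * ‖v i‖ ^ 2 := by
  have h : (inner ℝ (∑ i, c i • v i) (∑ i, c i • v i) : ℝ) = ∑ i, (c i) ^ 2 * ‖v i‖ ^ 2 := by
    rw [sum_inner]
    refine Finset.sum_congr rfl fun i _ => ?_
    rw [inner_sum]
    rw [Finset.sum_eq_single i]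
    · rw [real_inner_smul_left, real_inner_smul_right, real_inner_self_eq_norm_sq]; ring
    · intro j _ hj
      rw [real_inner_smul_left, real_inner_smul_right, hortho i j (Ne.symm hj)]; ring
    · intro h; exact absurd (Finset.mem_univ i) h
  rw [← real_inner_self_eq_norm_sq, h]

lemma key_lb (n : ℕ) (N : EuclideanSpace ℝ (Fin n) → ℝ)
    (α : EuclideanSpace ℝ (Fin n) ≃ₗ[ℝ] EuclideanSpace ℝ (Fin n))
    (hα : ∀ v, ‖v‖ / Real.sqrt n ≤ N (α v) ∧ N (α v) ≤ ‖v‖)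
    (K : ℝ) (hK : 0 ≤ K)
    (M : ℝ) (hM : M = 2 * (n : ℝ) ^ 3 * K)
    (v : Fin n → EuclideanSpace ℝ (Fin n))
    (hortho : ∀ i j, i ≠ j → (inner ℝ (v i) (v j) : ℝ) = 0)
    (hnorm : ∀ i, ‖v i‖ = M)
    (g : Fin n → EuclideanSpace ℝ (Fin n))
    (hclose : ∀ i, N (g i - α (v i)) ≤ (n : ℝ) * K)
    (c : Fin n → ℝ) :
    (n : ℝ) ^ 2 * K * Real.sqrt (∑ i, (c i) ^ 2) ≤ ‖∑ i, c i • α.symm (g i)‖ := by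
  rcases Nat.eq_zero_or_pos n with hn | hn
  · subst hn; simp
  have hnR : (0 : ℝ) < n := by exact_mod_cast hn
  have hsqn : (0 : ℝ) < Real.sqrt n := Real.sqrt_pos.mpr hnR
  set s : ℝ := Real.sqrt (∑ i, (c i) ^ 2) with hs
  have hs0 : 0 ≤ s := Real.sqrt_nonneg _
  have hM0 : 0 ≤ M := by rw [hM]; positivity
  -- bound on d i
  have hd : ∀ i, ‖α.symm (g i) - v i‖ ≤ Real.sqrt n * ((n : ℝ) * K) := by
    intro i
    have h1 := (hα (α.symm (g i) - v i)).1
    rw [map_sub, α.apply_symm_apply] at h1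
    have h2 := hclose i
    have := h1.trans h2
    calc ‖α.symm (g i) - v i‖ = ‖α.symm (g i) - v i‖ / Real.sqrt n * Real.sqrt n := by
          field_simp
      _ ≤ (n : ℝ) * K * Real.sqrt n := by
          apply mul_le_mul_of_nonneg_right this hsqn.le
      _ = Real.sqrt n * ((n : ℝ) * K) := by ring
  -- norm of main part
  have h1 : ‖∑ i, c i • v i‖ = M * s := by
    have := orth_norm_sq v hortho c
    have h2 : ‖∑ i, c i • v i‖ ^ 2 = M ^ 2 * ∑ i, (c i) ^ 2 := by
      rw [this]; rw [Finset.mul_sum]; refine Finset.sum_congr rfl fun i _ => ?_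
      rw [hnorm i]; ring
    have := congrArg Real.sqrt h2
    rwa [Real.sqrt_sq (norm_nonneg _), Real.sqrt_mul (sq_nonneg M), Real.sqrt_sq hM0] at this
  -- bound on error part
  have habs : ∑ i, |c i| ≤ Real.sqrt n * s := by
    have h3 : (∑ i, |c i|) ^ 2 ≤ (n : ℝ) * ∑ i, (c i) ^ 2 := by
      have := sq_sum_le_card_mul_sum_sq (s := Finset.univ) (f := fun i => |c i|)
      simpa [sq_abs] using this
    have h4 := Real.sqrt_le_sqrt h3
    rwa [Real.sqrt_sq (Finset.sum_nonneg fun i _ => abs_nonneg _),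
      Real.sqrt_mul (le_of_lt hnR)] at h4
  have h2 : ‖∑ i, c i • (α.symm (g i) - v i)‖ ≤ (n : ℝ) ^ 2 * K * s := by
    calc ‖∑ i, c i • (α.symm (g i) - v i)‖ ≤ ∑ i, ‖c i • (α.symm (g i) - v i)‖ :=
          norm_sum_le _ _
      _ ≤ ∑ i, |c i| * (Real.sqrt n * ((n : ℝ) * K)) := by
          refine Finset.sum_le_sum fun i _ => ?_
          rw [norm_smul, Real.norm_eq_abs]
          exact mul_le_mul_of_nonneg_left (hd i) (abs_nonneg _)
      _ = (∑ i, |c i|) * (Real.sqrt n * ((n : ℝ) * K)) := by rw [← Finset.sum_mul]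
      _ ≤ (Real.sqrt n * s) * (Real.sqrt n * ((n : ℝ) * K)) := by
          apply mul_le_mul_of_nonneg_right habs; positivity
      _ = (Real.sqrt n * Real.sqrt n) * ((n : ℝ) * K * s) := by ring
      _ = (n : ℝ) ^ 2 * K * s := by
          rw [Real.mul_self_sqrt (le_of_lt hnR)]; ring
  -- combine
  have hsplit : (∑ i, c i • α.symm (g i)) = (∑ i, c i • v i) + ∑ i, c i • (α.symm (g i) - v i) := by
    rw [← Finset.sum_add_distrib]
    refine Finset.sum_congr rfl fun i _ => ?_
    rw [← smul_add]; congr 1; abel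
  have hlow : ‖∑ i, c i • v i‖ - ‖∑ i, c i • (α.symm (g i) - v i)‖ ≤ ‖∑ i, c i • α.symm (g i)‖ := by
    rw [hsplit]
    have h := norm_le_add_norm_add (∑ i, c i • v i) (∑ i, c i • (α.symm (g i) - v i))
    linarith
  have h23 : (n : ℝ) ^ 2 ≤ (n : ℝ) ^ 3 := by
    have : (n : ℕ) ^ 2 ≤ n ^ 3 := Nat.pow_le_pow_right hn (by norm_num)
    exact_mod_cast this
  have hKs : 0 ≤ K * s := mul_nonneg hK hs0
  nlinarith [h1, h2, hlow, hKs, mul_le_mul_of_nonneg_right h23 hKs]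

/-- Given a norm `N` on `ℝⁿ` compared to the Euclidean norm via a linear
isomorphism `α` (John position), constants `D, C > 0`, `M = 2n³(2D+C)`, an orthogonal basis
`v₁, …, vₙ` of Euclidean norm `M`, and integer points `g₁, …, gₙ` with
`N (gᵢ - α vᵢ) ≤ n(2D+C)`, the family `g` is linearly independent and every nonzero element
of the subgroup it generates satisfies `‖α⁻¹ g‖₂ ≥ D + C`. -/
theorem stmt3 (n : ℕ) (N : EuclideanSpace ℝ (Fin n) → ℝ)
    (hN1 : ∀ u v, N (u + v) ≤ N u + N v)
    (hN2 : ∀ (c : ℝ) (v), N (c • v) = |c| * N v)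
    (hN3 : ∀ v, N v = 0 → v = 0)
    (α : EuclideanSpace ℝ (Fin n) ≃ₗ[ℝ] EuclideanSpace ℝ (Fin n))
    (hα : ∀ v, ‖v‖ / Real.sqrt n ≤ N (α v) ∧ N (α v) ≤ ‖v‖)
    (D C : ℝ) (hD : 0 < D) (hC : 0 < C)
    (M : ℝ) (hM : M = 2 * (n : ℝ) ^ 3 * (2 * D + C))
    (v : Fin n → EuclideanSpace ℝ (Fin n))
    (hortho : ∀ i j, i ≠ j → (inner ℝ (v i) (v j) : ℝ) = 0)
    (hnorm : ∀ i, ‖v i‖ = M)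
    (g : Fin n → EuclideanSpace ℝ (Fin n))
    (hint : ∀ i j, ∃ k : ℤ, g i j = (k : ℝ))
    (hclose : ∀ i, N (g i - α (v i)) ≤ (n : ℝ) * (2 * D + C)) :
    LinearIndependent ℝ g ∧
      ∀ w ∈ AddSubgroup.closure (Set.range g), w ≠ 0 → D + C ≤ ‖α.symm w‖ := by
  have hK : (0 : ℝ) ≤ 2 * D + C := by linarith
  have key := key_lb n N α hα (2 * D + C) hK M hM v hortho hnorm g hclose
  have he : LinearIndependent ℝ (fun i => α.symm (g i)) := by
    rw [Fintype.linearIndependent_iff]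
    intro c hc i
    have hk := key c
    rw [hc, norm_zero] at hk
    have hn : 0 < n := i.pos
    have hn1 : (1 : ℝ) ≤ (n : ℝ) := by exact_mod_cast hn
    have hs0 : 0 ≤ Real.sqrt (∑ j, (c j) ^ 2) := Real.sqrt_nonneg _
    have hspos : (0 : ℝ) < (n : ℝ) ^ 2 * (2 * D + C) :=
      mul_pos (pow_pos (by exact_mod_cast hn) 2) (by linarith)
    have hsle : Real.sqrt (∑ j, (c j) ^ 2) ≤ 0 := by
      by_contra h
      push_neg at h
      nlinarith [mul_pos hspos h]
    have hs : Real.sqrt (∑ j, (c j) ^ 2) = 0 := le_antisymm hsle hs0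
    have hsum : ∑ j, (c j) ^ 2 ≤ 0 := Real.sqrt_eq_zero'.mp hs
    have hsum0 : ∑ j, (c j) ^ 2 = 0 :=
      le_antisymm hsum (Finset.sum_nonneg fun j _ => sq_nonneg _)
    have := (Finset.sum_eq_zero_iff_of_nonneg (fun j _ => sq_nonneg (c j))).mp hsum0 i
      (Finset.mem_univ i)
    exact pow_eq_zero_iff (by norm_num) |>.mp this
  constructor
  · have h := he.map' α.toLinearMap α.ker
    have hg : (⇑α.toLinearMap ∘ fun i => α.symm (g i)) = g := by
      funext i; simp
    rwa [hg] at h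
  · intro w hw hw0
    have hspan : w ∈ Submodule.span ℤ (Set.range g) := by
      have hle : AddSubgroup.closure (Set.range g) ≤
          (Submodule.span ℤ (Set.range g)).toAddSubgroup :=
        (AddSubgroup.closure_le _).mpr Submodule.subset_span
      exact hle hw
    obtain ⟨c, hc⟩ := (Submodule.mem_span_range_iff_exists_fun ℤ).mp hspan
    have hsymm : α.symm w = ∑ i, ((c i : ℝ)) • α.symm (g i) := by
      rw [← hc, map_sum]
      refine Finset.sum_congr rfl fun i _ => ?_
      rw [map_zsmul, Int.cast_smul_eq_zsmul]
    have hex : ∃ i, c i ≠ 0 := by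
      by_contra h
      push_neg at h
      apply hw0
      rw [← hc]
      simp [h]
    obtain ⟨i₀, hi₀⟩ := hex
    have hn : 0 < n := i₀.pos
    have hn1 : (1 : ℝ) ≤ (n : ℝ) := by exact_mod_cast hn
    have hs1 : (1 : ℝ) ≤ Real.sqrt (∑ i, ((c i : ℝ)) ^ 2) := by
      have h1 : (1 : ℝ) ≤ ∑ i, ((c i : ℝ)) ^ 2 := by
        have habs : (1 : ℤ) ≤ |c i₀| := Int.one_le_abs hi₀
        have h2 : (1 : ℝ) ≤ ((c i₀ : ℝ)) ^ 2 := by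
          have : (1 : ℤ) ≤ (c i₀) ^ 2 := by nlinarith [sq_abs (c i₀)]
          exact_mod_cast this
        calc (1 : ℝ) ≤ ((c i₀ : ℝ)) ^ 2 := h2
          _ ≤ ∑ i, ((c i : ℝ)) ^ 2 :=
            Finset.single_le_sum (f := fun i => ((c i : ℝ)) ^ 2)
              (fun i _ => sq_nonneg _) (Finset.mem_univ i₀)
      calc (1 : ℝ) = Real.sqrt 1 := Real.sqrt_one.symm
        _ ≤ _ := Real.sqrt_le_sqrt h1
    have hk := key fun i => (c i : ℝ)
    rw [← hsymm] at hk
    have hA : 2 * D + C ≤ (n : ℝ) ^ 2 * (2 * D + C) := by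
      nlinarith [mul_nonneg (show (0:ℝ) ≤ (n:ℝ)^2 - 1 by nlinarith) hK]
    have hB : (n : ℝ) ^ 2 * (2 * D + C) ≤
        (n : ℝ) ^ 2 * (2 * D + C) * Real.sqrt (∑ i, ((c i : ℝ)) ^ 2) :=
      le_mul_of_one_le_right (mul_nonneg (sq_nonneg _) hK) hs1
    have hfin : 2 * D + C ≤ (n : ℝ) ^ 2 * (2 * D + C) * Real.sqrt (∑ i, ((c i : ℝ)) ^ 2) :=
      hA.trans hB
    linarith
end

section
/- Let ‖·‖ be a norm on ℝⁿ such that the set S = {g ∈ ℤⁿ : ‖g‖ ≤ R} generates ℤⁿ as a group, for some R > 0. Then for every v ∈ ℝⁿ there exists g ∈ ℤⁿ with ‖v − g‖ ≤ nR. -/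
private lemma stmt5_sum_le {n : ℕ} (N : (Fin n → ℝ) → ℝ)
    (hN1 : ∀ u v, N (u + v) ≤ N u + N v) (hN0 : N 0 = 0)
    {ι : Type*} (s : Finset ι) (f : ι → (Fin n → ℝ)) :
    N (∑ i ∈ s, f i) ≤ ∑ i ∈ s, N (f i) := by
  classical
  induction s using Finset.induction with
  | empty => simp [hN0]
  | insert _ _ h ih =>
    rw [Finset.sum_insert h, Finset.sum_insert h]
    exact le_trans (hN1 _ _) (by linarith)

private def stmt5_coeHom (n : ℕ) : (Fin n → ℤ) →+ (Fin n → ℝ) where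
  toFun g := fun i => (g i : ℝ)
  map_zero' := by funext i; simp
  map_add' a b := by funext i; simp

/-- If the lattice points of `‖·‖`-norm at most `R` generate `ℤⁿ`, then the
integer lattice is `nR`-dense in `(ℝⁿ, ‖·‖)`. -/
theorem stmt5 (n : ℕ) (N : (Fin n → ℝ) → ℝ)
    (hN1 : ∀ u v, N (u + v) ≤ N u + N v)
    (hN2 : ∀ (c : ℝ) (v), N (c • v) = |c| * N v)
    (hN3 : ∀ v, N v = 0 → v = 0)
    (R : ℝ) (hR : 0 < R)
    (hgen : AddSubgroup.closure {g : Fin n → ℤ | N (fun i => (g i : ℝ)) ≤ R} = ⊤) :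
    ∀ v : Fin n → ℝ, ∃ g : Fin n → ℤ, N (v - fun i => (g i : ℝ)) ≤ (n : ℝ) * R := by
  classical
  have hN0 : N 0 = 0 := by
    have := hN2 0 0; simpa using this
  set S : Set (Fin n → ℤ) := {g : Fin n → ℤ | N (fun i => (g i : ℝ)) ≤ R} with hS
  set sR : Set (Fin n → ℝ) := (fun g : Fin n → ℤ => (fun i => (g i : ℝ))) '' S with hsR
  -- every integer vector's real image lies in the span of sR
  have key : AddSubgroup.closure S ≤
      (Submodule.span ℝ sR).toAddSubgroup.comap (stmt5_coeHom n) := by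
    rw [AddSubgroup.closure_le]
    intro g hg
    exact Submodule.subset_span ⟨g, hg, rfl⟩
  have hmem : ∀ g : Fin n → ℤ, (fun i => (g i : ℝ)) ∈ Submodule.span ℝ sR := by
    intro g
    have : g ∈ AddSubgroup.closure S := by rw [hgen]; trivial
    exact key this
  have hspan : ⊤ ≤ Submodule.span ℝ sR := by
    rw [← (Pi.basisFun ℝ (Fin n)).span_eq, Submodule.span_le]
    rintro x ⟨i, rfl⟩
    have h1 : (Pi.basisFun ℝ (Fin n)) i
        = (fun j => (((Pi.single i 1 : Fin n → ℤ)) j : ℝ)) := by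
      funext j
      by_cases h : j = i <;> simp [Pi.single_apply, h]
    rw [h1]
    exact hmem _
  obtain ⟨b, hbsub, hbspan, hbli⟩ := exists_linearIndependent ℝ sR
  have hbtop : Submodule.span ℝ (Set.range ((↑) : b → (Fin n → ℝ))) = ⊤ := by
    rw [Subtype.range_coe, hbspan]
    exact le_antisymm le_top hspan
  let B : Module.Basis b ℝ (Fin n → ℝ) := Module.Basis.mk hbli (by rw [hbtop])
  haveI : Fintype b := FiniteDimensional.fintypeBasisIndex B
  have hcard : Fintype.card b = n := by
    rw [← Module.finrank_eq_card_basis B]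
    simp
  intro v
  have hrep : ∀ i : b, ∃ z : Fin n → ℤ,
      (fun j => (z j : ℝ)) = (i : Fin n → ℝ) ∧ N (i : Fin n → ℝ) ≤ R := by
    intro i
    obtain ⟨z, hz, hze⟩ := hbsub i.2
    exact ⟨z, hze, by rw [← hze]; exact hz⟩
  choose z hz hNz using hrep
  set c : b → ℝ := fun i => B.repr v i with hc
  refine ⟨∑ i : b, ⌊c i⌋ • z i, ?_⟩
  have hgcoe : (fun j => (((∑ i : b, ⌊c i⌋ • z i) j : ℤ) : ℝ))
      = ∑ i : b, (⌊c i⌋ : ℝ) • (i : Fin n → ℝ) := by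
    funext j
    rw [Finset.sum_apply]
    push_cast [Finset.sum_apply]
    refine Finset.sum_congr rfl fun i _ => ?_
    have := congrFun (hz i) j
    simp [this]
  rw [hgcoe]
  have hv : v = ∑ i : b, c i • (i : Fin n → ℝ) := by
    conv_lhs => rw [← B.sum_repr v]
    refine Finset.sum_congr rfl fun i _ => ?_
    rw [hc]
    congr 1
    simp [B, Module.Basis.mk_apply]
  have hdiff : v - (∑ i : b, (⌊c i⌋ : ℝ) • (i : Fin n → ℝ))
      = ∑ i : b, (c i - ⌊c i⌋) • (i : Fin n → ℝ) := by
    conv_lhs => rw [hv]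
    rw [← Finset.sum_sub_distrib]
    refine Finset.sum_congr rfl fun i _ => ?_
    rw [sub_smul]
  rw [hdiff]
  calc N (∑ i : b, (c i - ⌊c i⌋) • (i : Fin n → ℝ))
      ≤ ∑ i : b, N ((c i - ⌊c i⌋) • (i : Fin n → ℝ)) :=
        stmt5_sum_le N hN1 hN0 _ _
    _ ≤ ∑ _i : b, R := by
        refine Finset.sum_le_sum fun i _ => ?_
        rw [hN2]
        have h1 : |c i - ⌊c i⌋| ≤ 1 := by
          rw [abs_le]
          constructor
          · have := Int.fract_nonneg (c i); unfold Int.fract at this; linarith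
          · have := Int.fract_lt_one (c i); unfold Int.fract at this; linarith
        have h2 : 0 ≤ N (i : Fin n → ℝ) := by
          have ha : N ((-1 : ℝ) • (i : Fin n → ℝ)) = N (i : Fin n → ℝ) := by
            rw [hN2]; simp
          have hb : N 0 ≤ N (i : Fin n → ℝ) + N ((-1:ℝ) • (i : Fin n → ℝ)) := by
            have := hN1 (i : Fin n → ℝ) ((-1:ℝ) • (i : Fin n → ℝ))
            simpa using this
          rw [hN0, ha] at hb; linarith
        calc |c i - ⌊c i⌋| * N (i : Fin n → ℝ) ≤ 1 * N (i : Fin n → ℝ) :=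
              mul_le_mul_of_nonneg_right h1 h2
          _ = N (i : Fin n → ℝ) := one_mul _
          _ ≤ R := hNz i
    _ = (n : ℝ) * R := by
        rw [Finset.sum_const, Finset.card_univ, hcard, nsmul_eq_mul]
end

section
/- Let X be a metric space on which a group Γ acts by isometries, T ⊆ Γ a symmetric subset, and B ⊆ X a subset such that: whenever t ∈ T⁶ (a product of at most 6 elements of T) satisfies tB ∩ B ≠ ∅, then t ∈ T. Let Γ̃ be the group generated by the abstract symbols {t♯ : t ∈ T³} subject to the relations a♯b♯ = c♯ whenever a,b,c ∈ T³ and ab = c in Γ, and let ∼ be the minimal equivalence relation on Γ̃ × B such that (g t♯, x) ∼ (g, t x) whenever g ∈ Γ̃, t ∈ T, and x, tx ∈ B. Then for (a,x),(b,y) ∈ Γ̃ × B, we have (a,x) ∼ (b,y) if and only if there exists t ∈ T with b = a t♯ and x = t y. -/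
open Pointwise

/-- Multiplication-table relations on `T³ ⊆ Γ`. -/
def tripleRels {Γ : Type} [Group Γ] (T : Set Γ) : Set (FreeGroup ↥(T ^ 3)) :=
  {w | ∃ a b c : ↥(T ^ 3), (a : Γ) * (b : Γ) = (c : Γ) ∧
    w = FreeGroup.of a * FreeGroup.of b * (FreeGroup.of c)⁻¹}

/-- The group `Γ̃` generated by `T³` with the multiplication-table relations. -/
abbrev MonGroup {Γ : Type} [Group Γ] (T : Set Γ) : Type := PresentedGroup (tripleRels T)

/-- The canonical embedding `t ↦ t♯` of `T³` into `Γ̃`. -/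
def sharp {Γ : Type} [Group Γ] (T : Set Γ) (t : Γ) (h : t ∈ T ^ 3) : MonGroup T :=
  PresentedGroup.of ⟨t, h⟩

/-- The base relation generating `∼` on `Γ̃ × B`:
`(g t♯, x) ∼ (g, t x)` whenever `t ∈ T` and `x, t x ∈ B`. -/
def MonRel {Γ : Type} [Group Γ] (T : Set Γ) {X : Type} [MulAction Γ X] (B : Set X) :
    MonGroup T × ↥B → MonGroup T × ↥B → Prop :=
  fun pq rs => ∃ (t : Γ) (_ : t ∈ T) (h3 : t ∈ T ^ 3),
    pq.1 = rs.1 * sharp T t h3 ∧ (rs.2 : X) = t • (pq.2 : X)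

lemma sharp_mul {Γ : Type} [Group Γ] {T : Set Γ} {s t u : Γ}
    (hs : s ∈ T ^ 3) (ht : t ∈ T ^ 3) (hu : u ∈ T ^ 3) (h : s * t = u) :
    sharp T s hs * sharp T t ht = sharp T u hu := by
  have hmem : FreeGroup.of (⟨s, hs⟩ : ↥(T ^ 3)) * FreeGroup.of (⟨t, ht⟩ : ↥(T ^ 3)) *
      (FreeGroup.of (⟨u, hu⟩ : ↥(T ^ 3)))⁻¹ ∈ tripleRels T :=
    ⟨⟨s, hs⟩, ⟨t, ht⟩, ⟨u, hu⟩, h, rfl⟩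
  have h1 : (QuotientGroup.mk (FreeGroup.of (⟨s, hs⟩ : ↥(T ^ 3)) *
      FreeGroup.of (⟨t, ht⟩ : ↥(T ^ 3)) * (FreeGroup.of (⟨u, hu⟩ : ↥(T ^ 3)))⁻¹) :
      PresentedGroup (tripleRels T)) = 1 :=
    (QuotientGroup.eq_one_iff _).mpr (Subgroup.subset_normalClosure hmem)
  have h2 : sharp T s hs * sharp T t ht * (sharp T u hu)⁻¹ = 1 := by
    simp only [sharp, PresentedGroup.of]
    rw [← map_inv, ← map_mul, ← map_mul]
    exact h1
  group at h2 ⊢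
  exact mul_inv_eq_one.mp h2

lemma mem_T3 {Γ : Type} [Group Γ] {T : Set Γ} (h1 : (1 : Γ) ∈ T) {t : Γ} (ht : t ∈ T) :
    t ∈ T ^ 3 := by
  have : (1 : Γ) * 1 * t ∈ T * T * T := Set.mul_mem_mul (Set.mul_mem_mul h1 h1) ht
  simpa [pow_succ, pow_zero] using this

lemma mem_T6 {Γ : Type} [Group Γ] {T : Set Γ} (h1 : (1 : Γ) ∈ T) {s t : Γ}
    (hs : s ∈ T) (ht : t ∈ T) : s * t ∈ T ^ 6 := by
  have : ((((1 : Γ) * 1 * 1 * 1) * s) * t) ∈ T * T * T * T * T * T :=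
    Set.mul_mem_mul (Set.mul_mem_mul
      (Set.mul_mem_mul (Set.mul_mem_mul (Set.mul_mem_mul h1 h1) h1) h1) hs) ht
  simpa [pow_succ, pow_zero] using this

/-- Under condition (ii) (`t ∈ T⁶` with `tB ∩ B ≠ ∅` implies `t ∈ T`),
two pairs `(a, x)` and `(b, y)` in `Γ̃ × B` are equivalent for the monodromy relation iff
there is `t ∈ T` with `b = a t♯` and `x = t y`. -/
theorem stmt6 {Γ X : Type} [Group Γ] [MetricSpace X] [MulAction Γ X]
    (hiso : ∀ g : Γ, Isometry (fun x : X => g • x))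
    (T : Set Γ) (h1 : (1 : Γ) ∈ T) (hsymmT : ∀ t ∈ T, t⁻¹ ∈ T)
    (B : Set X)
    (hii : ∀ t ∈ T ^ 6, (∃ x ∈ B, t • x ∈ B) → t ∈ T)
    (a b : MonGroup T) (x y : ↥B) :
    Relation.EqvGen (MonRel T B) (a, x) (b, y) ↔
      ∃ (t : Γ) (_ : t ∈ T) (h3 : t ∈ T ^ 3),
        b = a * sharp T t h3 ∧ (x : X) = t • (y : X) := by
  set R : MonGroup T × ↥B → MonGroup T × ↥B → Prop := fun p q =>
    ∃ (t : Γ) (_ : t ∈ T) (h3 : t ∈ T ^ 3),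
      q.1 = p.1 * sharp T t h3 ∧ (p.2 : X) = t • (q.2 : X) with hR
  have hone : sharp T 1 (mem_T3 h1 h1) = 1 :=
    mul_eq_left.mp (sharp_mul (mem_T3 h1 h1) (mem_T3 h1 h1) (mem_T3 h1 h1) (one_mul 1))
  have hrefl : ∀ p, R p p := by
    intro p
    exact ⟨1, h1, mem_T3 h1 h1, by rw [hone, mul_one], by simp⟩
  have hsymm : ∀ p q, R p q → R q p := by
    rintro p q ⟨t, ht, h3, hq, hp⟩
    refine ⟨t⁻¹, hsymmT t ht, mem_T3 h1 (hsymmT t ht), ?_, ?_⟩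
    · have := sharp_mul h3 (mem_T3 h1 (hsymmT t ht)) (mem_T3 h1 h1) (mul_inv_cancel t)
      rw [hone] at this
      rw [hq, mul_assoc, this, mul_one]
    · rw [hp, inv_smul_smul]
  have htrans : ∀ p q r, R p q → R q r → R p r := by
    rintro p q r ⟨s, hs, hs3, hq1, hp2⟩ ⟨t, ht, ht3, hr1, hq2⟩
    have hst : s * t ∈ T := by
      refine hii (s * t) (mem_T6 h1 hs ht) ⟨(r.2 : X), r.2.2, ?_⟩
      rw [mul_smul, ← hq2, ← hp2]
      exact p.2.2
    refine ⟨s * t, hst, mem_T3 h1 hst, ?_, ?_⟩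
    · rw [hr1, hq1, mul_assoc, sharp_mul hs3 ht3 (mem_T3 h1 hst) rfl]
    · rw [hp2, hq2, mul_smul]
  have key : ∀ p q, Relation.EqvGen (MonRel T B) p q → R p q := by
    intro p q h
    induction h with
    | rel p q hpq =>
        rcases hpq with ⟨t, ht, h3, hpq1, hpq2⟩
        exact hsymm q p ⟨t, ht, h3, hpq1, hpq2⟩
    | refl p => exact hrefl p
    | symm p q _ ih => exact hsymm p q ih
    | trans p q r _ _ ih1 ih2 => exact htrans p q r ih1 ih2
  constructor
  · exact key _ _
  · rintro ⟨t, ht, h3, hb, hx⟩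
    exact Relation.EqvGen.symm _ _
      (Relation.EqvGen.rel (b, y) (a, x) ⟨t, ht, h3, hb, hx⟩)
end

section
/- Let X be a metric space with an isometric action of a group Γ, B ⊆ X, T ⊆ Γ symmetric with the property that t ∈ T⁶ and tB ∩ B ≠ ∅ imply t ∈ T. Let Γ̃ be the group presented by generators {t♯ : t ∈ T³} and relations a♯b♯ = c♯ whenever a,b,c ∈ T³ with ab = c in Γ. Fix p ∈ X, let Φ : Γ̃ → Γ be the unique homomorphism with Φ(t♯) = t for t ∈ T³, let Σ = {g ∈ Γ̃ : p ∈ Φ(g)B}, and let K ⊆ Σ be any subset such that distinct a,b ∈ K satisfy b ∉ a T♯ (where T♯ = {t♯ : t ∈ T}). Then whenever a, b ∈ K satisfy a·(T³)♯ ∩ b·(T³)♯ ≠ ∅, one has a = b. -/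
open Pointwise

lemma sharp_mul_s7 {Γ : Type} [Group Γ] (T : Set Γ) (a b c : ↥(T ^ 3))
    (h : (a : Γ) * b = c) :
    (PresentedGroup.of a : MonGroup T) * PresentedGroup.of b = PresentedGroup.of c := by
  have hr : (FreeGroup.of a * FreeGroup.of b * (FreeGroup.of c)⁻¹) ∈ tripleRels T :=
    ⟨a, b, c, h, rfl⟩
  have : (QuotientGroup.mk (FreeGroup.of a * FreeGroup.of b * (FreeGroup.of c)⁻¹) :
      MonGroup T) = 1 := by
    rw [QuotientGroup.eq_one_iff]
    exact Subgroup.subset_normalClosure hr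
  have h2 : (PresentedGroup.of a : MonGroup T) * PresentedGroup.of b *
      (PresentedGroup.of c)⁻¹ = 1 := this
  exact mul_inv_eq_one.mp h2

/-- Let `Φ : Γ̃ → Γ` be the homomorphism with `Φ(t♯) = t`, let
`Σ = {g : p ∈ Φ(g) B}`, and let `K ⊆ Σ` be `T♯`-separated. If `a, b ∈ K` satisfy
`a (T³)♯ ∩ b (T³)♯ ≠ ∅`, then `a = b`. -/
theorem stmt7 {Γ X : Type} [Group Γ] [MetricSpace X] [MulAction Γ X]
    (hiso : ∀ g : Γ, Isometry (fun x : X => g • x))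
    (T : Set Γ) (h1 : (1 : Γ) ∈ T) (hsymmT : ∀ t ∈ T, t⁻¹ ∈ T)
    (B : Set X)
    (hii : ∀ t ∈ T ^ 6, (∃ x ∈ B, t • x ∈ B) → t ∈ T)
    (Φ : MonGroup T →* Γ)
    (hΦ : ∀ t : ↥(T ^ 3), Φ (PresentedGroup.of t) = (t : Γ))
    (p : X) (K : Set (MonGroup T))
    (hKSigma : ∀ g ∈ K, ∃ x ∈ B, Φ g • x = p)
    (hsep : ∀ a ∈ K, ∀ b ∈ K, a ≠ b →
      ¬∃ (t : Γ) (_ : t ∈ T) (h3 : t ∈ T ^ 3), b = a * sharp T t h3) :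
    ∀ a ∈ K, ∀ b ∈ K,
      (∃ s t : ↥(T ^ 3), a * PresentedGroup.of s = b * PresentedGroup.of t) → a = b := by
  intro a ha b hb ⟨s, t, hst⟩
  by_contra hne
  -- u = s * t⁻¹
  set u : Γ := (s : Γ) * (t : Γ)⁻¹ with hu
  -- t⁻¹ ∈ T^3
  have hinv : ∀ x : Γ, x ∈ T ^ 3 → x⁻¹ ∈ T ^ 3 := by
    intro x hx
    rw [show (3:ℕ) = 1+1+1 by rfl, pow_add, pow_add, pow_one] at hx ⊢
    obtain ⟨y, ⟨y1, hy1, y2, hy2, rfl⟩, y3, hy3, rfl⟩ := hx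
    rw [mul_inv_rev, mul_inv_rev, ← mul_assoc]
    exact Set.mul_mem_mul (Set.mul_mem_mul (hsymmT _ hy3) (hsymmT _ hy2)) (hsymmT _ hy1)
  have hu6 : u ∈ T ^ 6 := by
    have : u ∈ T ^ 3 * T ^ 3 := Set.mul_mem_mul s.2 (hinv _ t.2)
    rwa [← pow_add] at this
  obtain ⟨x, hx, hxp⟩ := hKSigma a ha
  obtain ⟨y, hy, hyp⟩ := hKSigma b hb
  have hΦb : Φ b = Φ a * u := by
    have := congrArg Φ hst
    simp only [map_mul, hΦ] at this
    rw [hu, ← mul_assoc, this, mul_inv_cancel_right]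
  have huy : u • y = x := by
    have : Φ b • y = Φ a • x := by rw [hxp, hyp]
    rw [hΦb, mul_smul] at this
    exact smul_left_cancel (Φ a) this
  have huT : u ∈ T := hii u hu6 ⟨y, hy, huy ▸ hx⟩
  have huT3 : u ∈ T ^ 3 := by
    rw [show (3:ℕ) = 1+1+1 by rfl, pow_add, pow_add, pow_one]
    have : u = u * 1 * 1 := by group
    rw [this]
    exact Set.mul_mem_mul (Set.mul_mem_mul huT h1) h1
  apply hsep a ha b hb hne
  refine ⟨u, huT, huT3, ?_⟩
  have hrel : (PresentedGroup.of (⟨u, huT3⟩ : ↥(T^3)) : MonGroup T) * PresentedGroup.of t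
      = PresentedGroup.of s := sharp_mul_s7 T _ _ _ (by simp [hu])
  rw [sharp]
  calc b = a * PresentedGroup.of s * (PresentedGroup.of t)⁻¹ := by
            rw [hst]; group
    _ = a * PresentedGroup.of ⟨u, huT3⟩ := by rw [← hrel]; group
end

section
/- In the setting of the monodromy covering construction (X proper geodesic, Γ ≤ Iso(X) closed, B connected open with ΓB = X, S symmetric generating, T = S^M satisfying conditions (i)–(iii), Γ̃ the group presented on T³ with multiplication relations, Φ : Γ̃ → Γ the induced homomorphism, X̃ = (Γ̃ × B)/∼, and Ψ : X̃ → X the covering map Ψ[(g,x)] = Φ(g)x), the map Ψ is a homeomorphism if and only if {g ∈ Γ̃ : Φ(g)B ∩ B ≠ ∅} ⊆ T♯, where T♯ = {t♯ : t ∈ T}. -/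
open Pointwise

/-- A geodesic metric space. -/
def IsGeodesicSpace (X : Type) [MetricSpace X] : Prop :=
  ∀ x y : X, ∃ f : ℝ → X, f 0 = x ∧ f (dist x y) = y ∧
    ∀ s ∈ Set.Icc (0 : ℝ) (dist x y), ∀ t ∈ Set.Icc (0 : ℝ) (dist x y),
      dist (f s) (f t) = |s - t|

/-- `Γ̃` carries the discrete topology. -/
instance {Γ : Type} [Group Γ] (T : Set Γ) : TopologicalSpace (MonGroup T) := ⊥

/-- A continuous map out of a product whose first factor is discrete, given slicewise
continuity. -/
private lemma cont_discrete_prod {A B C : Type*} [TopologicalSpace A] [DiscreteTopology A]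
    [TopologicalSpace B] [TopologicalSpace C] (f : A × B → C)
    (h : ∀ a, Continuous fun b => f (a, b)) : Continuous f := by
  rw [continuous_iff_continuousAt]
  rintro ⟨a, b⟩
  unfold ContinuousAt
  rw [nhds_prod_eq, nhds_discrete, Filter.pure_prod, Filter.tendsto_map'_iff]
  exact (h a).continuousAt

/-- The multiplication-table relations hold in the presented group. -/
private lemma presented_mul {Γ : Type} [Group Γ] (T : Set Γ) (a b c : ↥(T ^ 3))
    (h : (a : Γ) * (b : Γ) = (c : Γ)) :
    (PresentedGroup.of a : MonGroup T) * PresentedGroup.of b = PresentedGroup.of c := by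
  have hmem : FreeGroup.of a * FreeGroup.of b * (FreeGroup.of c)⁻¹ ∈ tripleRels T :=
    ⟨a, b, c, h, rfl⟩
  have h1 : (QuotientGroup.mk (FreeGroup.of a * FreeGroup.of b * (FreeGroup.of c)⁻¹) :
      PresentedGroup (tripleRels T)) = 1 :=
    (QuotientGroup.eq_one_iff _).mpr (Subgroup.subset_normalClosure hmem)
  rw [QuotientGroup.mk_mul, QuotientGroup.mk_mul, QuotientGroup.mk_inv,
    mul_inv_eq_one] at h1
  exact h1

/-- In the monodromy construction, `Ψ` is a homeomorphism if and only if
`{g ∈ Γ̃ : Φ(g) B ∩ B ≠ ∅} ⊆ T♯`. -/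
theorem stmt9 {Γ X : Type} [Group Γ] [MetricSpace X] [ProperSpace X]
    [MulAction Γ X] [FaithfulSMul Γ X]
    (hgeo : IsGeodesicSpace X)
    (hiso : ∀ g : Γ, Isometry (fun x : X => g • x))
    (hclosed : IsClosed
      (Set.range (fun g : Γ => (⟨fun x => g • x, (hiso g).continuous⟩ : C(X, X)))))
    (B : Set X) (hBopen : IsOpen B) (hBconn : IsConnected B)
    (hcover : ∀ x : X, ∃ g : Γ, ∃ b ∈ B, g • b = x)
    (S : Set Γ) (h1 : (1 : Γ) ∈ S) (hsymmS : ∀ s ∈ S, s⁻¹ ∈ S)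
    (hgen : Subgroup.closure S = ⊤)
    (M : ℕ) (hM : 1 ≤ M) (T : Set Γ) (hT : T = S ^ M)
    (hi : ∀ s ∈ S, ∃ x ∈ B, s • x ∈ B)
    (hii : ∀ t ∈ T ^ 6, (∃ x ∈ B, t • x ∈ B) → t ∈ T)
    (hiii : ∀ g : Γ, (∃ x ∈ B, g • x ∈ B) → ∀ x ∈ B, ∃ t ∈ T, ∃ y ∈ B, g • x = t • y)
    (Φ : MonGroup T →* Γ)
    (hΦ : ∀ t : ↥(T ^ 3), Φ (PresentedGroup.of t) = (t : Γ))
    (Ψ : Quot (MonRel T B) → X)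
    (hΨ : ∀ (g : MonGroup T) (x : ↥B), Ψ (Quot.mk _ (g, x)) = Φ g • (x : X)) :
    IsHomeomorph Ψ ↔
      {g : MonGroup T | ∃ x ∈ B, Φ g • x ∈ B} ⊆
        {h : MonGroup T | ∃ (t : Γ) (_ : t ∈ T) (h3 : t ∈ T ^ 3), h = sharp T t h3} := by
  classical
  haveI : DiscreteTopology (MonGroup T) := ⟨rfl⟩
  haveI : ContinuousConstSMul Γ X := ⟨fun g => (hiso g).continuous⟩
  -- Elementary facts about `T`.
  have hmemPow : ∀ (U : Set Γ), (1 : Γ) ∈ U → ∀ (n : ℕ) (t : Γ), t ∈ U → t ∈ U ^ (n + 1) := by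
    intro U hU n
    induction n with
    | zero => intro t ht; simpa using ht
    | succ n ih =>
      intro t ht
      rw [pow_succ']
      simpa using Set.mul_mem_mul hU (ih t ht)
  have h1T : (1 : Γ) ∈ T := hT ▸ Set.one_mem_pow h1
  have hT3 : ∀ t ∈ T, t ∈ T ^ 3 := fun t ht => hmemPow T h1T 2 t ht
  have hST : S ⊆ T := by
    intro s hs
    obtain ⟨m, hm⟩ := Nat.exists_eq_add_of_le hM
    rw [hT, hm, add_comm]
    exact hmemPow S h1 m s hs
  have hTinv : ∀ t ∈ T, t⁻¹ ∈ T := by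
    have key : ∀ n : ℕ, ∀ t ∈ S ^ n, t⁻¹ ∈ S ^ n := by
      intro n
      induction n with
      | zero => intro t ht; simp only [pow_zero, Set.mem_one] at ht; simp [ht]
      | succ n ih =>
        intro t ht
        rw [pow_succ, Set.mem_mul] at ht
        obtain ⟨a, ha, b, hb, rfl⟩ := ht
        rw [mul_inv_rev, pow_succ']
        exact Set.mul_mem_mul (hsymmS b hb) (ih a ha)
    intro t ht
    rw [hT] at ht ⊢
    exact key M t ht
  have hmul6 : ∀ u t : Γ, u ∈ T → t ∈ T → u * t ∈ T ^ 6 := by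
    intro u t hu ht
    show u * t ∈ T ^ (5 + 1)
    rw [pow_succ]
    exact Set.mul_mem_mul (hmemPow T h1T 4 u hu) ht
  -- Facts about `sharp` and `Φ`.
  have hΦs : ∀ (t : Γ) (h3 : t ∈ T ^ 3), Φ (sharp T t h3) = t := fun t h3 => hΦ ⟨t, h3⟩
  have sharp_mul : ∀ (u t : Γ) (hu : u ∈ T ^ 3) (ht : t ∈ T ^ 3) (hut : u * t ∈ T ^ 3),
      sharp T u hu * sharp T t ht = sharp T (u * t) hut :=
    fun u t hu ht hut => presented_mul T ⟨u, hu⟩ ⟨t, ht⟩ ⟨u * t, hut⟩ rfl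
  have h13 : (1 : Γ) ∈ T ^ 3 := hT3 1 h1T
  have sharp_one : sharp T 1 h13 = 1 := by
    have key : sharp T 1 h13 * sharp T 1 h13 = sharp T 1 h13 :=
      presented_mul T ⟨1, h13⟩ ⟨1, h13⟩ ⟨1, h13⟩ (mul_one 1)
    have : sharp T 1 h13 * sharp T 1 h13 = sharp T 1 h13 * 1 := by rw [mul_one]; exact key
    exact mul_left_cancel this
  have sharp_inv : ∀ (t : Γ) (ht : t ∈ T ^ 3) (hti : t⁻¹ ∈ T ^ 3),
      (sharp T t ht)⁻¹ = sharp T t⁻¹ hti := by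
    intro t ht hti
    have key : sharp T t ht * sharp T t⁻¹ hti = sharp T 1 h13 :=
      presented_mul T ⟨t, ht⟩ ⟨t⁻¹, hti⟩ ⟨1, h13⟩ (mul_inv_cancel t)
    exact inv_eq_of_mul_eq_one_right (key.trans sharp_one)
  -- `Φ` is surjective.
  have hΦsurj : Function.Surjective Φ := by
    rw [← MonoidHom.range_eq_top, ← top_le_iff, ← hgen, Subgroup.closure_le]
    intro s hs
    exact ⟨sharp T s (hT3 s (hST hs)), hΦs s (hT3 s (hST hs))⟩
  -- The value of `Ψ` is invariant along the relation.
  have val_rel : ∀ pq rs, MonRel T B pq rs →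
      Φ pq.1 • (pq.2 : X) = Φ rs.1 • (rs.2 : X) := by
    rintro ⟨g, x⟩ ⟨h, y⟩ ⟨t, htT, h3, hg, hy⟩
    simp only at hg hy ⊢
    rw [hg, map_mul, hΦs t h3, hy, mul_smul]
  -- Main induction along the generated equivalence relation.
  have step : ∀ pq rs : MonGroup T × ↥B, Relation.EqvGen (MonRel T B) pq rs →
      Φ pq.1 • (pq.2 : X) = Φ rs.1 • (rs.2 : X) ∧
      (Φ pq.1 • (pq.2 : X) ∈ B →
        ((∃ (t : Γ) (_ : t ∈ T) (h3 : t ∈ T ^ 3), rs.1 = sharp T t h3) →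
          (∃ (t : Γ) (_ : t ∈ T) (h3 : t ∈ T ^ 3), pq.1 = sharp T t h3)) ∧
        ((∃ (t : Γ) (_ : t ∈ T) (h3 : t ∈ T ^ 3), pq.1 = sharp T t h3) →
          (∃ (t : Γ) (_ : t ∈ T) (h3 : t ∈ T ^ 3), rs.1 = sharp T t h3))) := by
    intro pq rs hrel
    induction hrel with
    | rel a b hab =>
      refine ⟨val_rel a b hab, fun hval => ?_⟩
      obtain ⟨t, htT, h3, ha1, hb2⟩ := hab
      constructor
      · rintro ⟨u, huT, hu3, hb⟩
        have hΦa : Φ a.1 = u * t := by rw [ha1, hb, map_mul, hΦs, hΦs]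
        have hutT : u * t ∈ T := hii _ (hmul6 u t huT htT)
          ⟨a.2, a.2.2, by rw [← hΦa]; exact hval⟩
        refine ⟨u * t, hutT, hT3 _ hutT, ?_⟩
        rw [ha1, hb]
        exact sharp_mul u t hu3 h3 (hT3 _ hutT)
      · rintro ⟨u, huT, hu3, ha⟩
        have hvalb : Φ b.1 • (b.2 : X) ∈ B := by
          rw [← val_rel a b ⟨t, htT, h3, ha1, hb2⟩]; exact hval
        have hb1 : b.1 = a.1 * (sharp T t h3)⁻¹ := by rw [ha1, mul_inv_cancel_right]
        have htiT : t⁻¹ ∈ T := hTinv t htT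
        have hti3 : t⁻¹ ∈ T ^ 3 := hT3 _ htiT
        have hΦb : Φ b.1 = u * t⁻¹ := by
          rw [hb1, ha, map_mul, map_inv, hΦs, hΦs]
        have hutT : u * t⁻¹ ∈ T := hii _ (hmul6 u t⁻¹ huT htiT)
          ⟨b.2, b.2.2, by rw [← hΦb]; exact hvalb⟩
        refine ⟨u * t⁻¹, hutT, hT3 _ hutT, ?_⟩
        rw [hb1, ha, sharp_inv t h3 hti3]
        exact sharp_mul u t⁻¹ hu3 hti3 (hT3 _ hutT)
    | refl a => exact ⟨rfl, fun _ => ⟨id, id⟩⟩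
    | symm a b h ih =>
      refine ⟨ih.1.symm, fun hval => ?_⟩
      have hval' : Φ a.1 • (a.2 : X) ∈ B := by rw [ih.1]; exact hval
      exact ⟨(ih.2 hval').2, (ih.2 hval').1⟩
    | trans a b c hab hbc ih1 ih2 =>
      refine ⟨ih1.1.trans ih2.1, fun hval => ?_⟩
      have hvalb : Φ b.1 • (b.2 : X) ∈ B := by rw [← ih1.1]; exact hval
      exact ⟨fun hc => (ih1.2 hval).1 ((ih2.2 hvalb).1 hc),
        fun ha => (ih2.2 hvalb).2 ((ih1.2 hval).2 ha)⟩
  constructor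
  · -- `Ψ` homeomorphism ⟹ the condition.
    intro hhomeo g hg
    simp only [Set.mem_setOf_eq] at hg ⊢
    obtain ⟨x, hxB, hgxB⟩ := hg
    have heq : Ψ (Quot.mk _ (g, ⟨x, hxB⟩)) = Ψ (Quot.mk _ (1, ⟨Φ g • x, hgxB⟩)) := by
      rw [hΨ, hΨ, map_one, one_smul]
    have hquot := hhomeo.bijective.injective heq
    have heqv : Relation.EqvGen (MonRel T B) (g, (⟨x, hxB⟩ : ↥B)) (1, (⟨Φ g • x, hgxB⟩ : ↥B)) :=
      Quot.eqvGen_exact hquot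
    have := (step _ _ heqv).2
    exact (this hgxB).1 ⟨1, h1T, h13, sharp_one.symm⟩
  · -- The condition ⟹ `Ψ` homeomorphism.
    intro hsub
    have hcontmk : Continuous (fun p : MonGroup T × ↥B => Φ p.1 • (p.2 : X)) :=
      cont_discrete_prod _ (fun g => (continuous_const_smul (Φ g)).comp continuous_subtype_val)
    have hΨmk : (Ψ ∘ Quot.mk (MonRel T B)) = fun p : MonGroup T × ↥B => Φ p.1 • (p.2 : X) := by
      funext p
      exact hΨ p.1 p.2
    refine ⟨?_, ?_, ?_, ?_⟩
    · -- continuity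
      exact isQuotientMap_quot_mk.continuous_iff.mpr (hΨmk ▸ hcontmk)
    · -- open map
      intro U hU
      have hV : IsOpen (Quot.mk (MonRel T B) ⁻¹' U) := hU.preimage continuous_quot_mk
      have himg : Ψ '' U = ⋃ g : MonGroup T,
          (fun x : X => Φ g • x) ''
            (Subtype.val '' ((fun b : ↥B => (g, b)) ⁻¹' (Quot.mk (MonRel T B) ⁻¹' U))) := by
        ext y
        constructor
        · rintro ⟨u, huU, rfl⟩
          obtain ⟨⟨g, b⟩, rfl⟩ := Quot.exists_rep u
          refine Set.mem_iUnion.mpr ⟨g, (b : X), ⟨b, huU, rfl⟩, ?_⟩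
          exact (hΨ g b).symm
        · intro hy
          obtain ⟨g, x, ⟨b, hbU, rfl⟩, rfl⟩ := Set.mem_iUnion.mp hy
          exact ⟨Quot.mk _ (g, b), hbU, hΨ g b⟩
      rw [himg]
      refine isOpen_iUnion fun g => ?_
      refine isOpenMap_smul (Φ g) _ ?_
      exact hBopen.isOpenMap_subtype_val _ (hV.preimage (Continuous.prodMk_right g))
    · -- injective
      intro u v huv
      obtain ⟨⟨g, x⟩, rfl⟩ := Quot.exists_rep u
      obtain ⟨⟨h, y⟩, rfl⟩ := Quot.exists_rep v
      rw [hΨ, hΨ] at huv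
      have hk : Φ (h⁻¹ * g) • (x : X) = (y : X) := by
        rw [map_mul, map_inv, mul_smul, huv, inv_smul_smul]
      have hmem : h⁻¹ * g ∈ {g : MonGroup T | ∃ x ∈ B, Φ g • x ∈ B} :=
        ⟨(x : X), x.2, by rw [hk]; exact y.2⟩
      obtain ⟨t, htT, h3, hk'⟩ := hsub hmem
      apply Quot.sound
      refine ⟨t, htT, h3, ?_, ?_⟩
      · show g = h * sharp T t h3
        rw [← hk', mul_inv_cancel_left]
      · show (y : X) = t • (x : X)
        rw [← hk, hk', hΦs t h3]
    · -- surjective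
      intro z
      obtain ⟨g, b, hbB, hgb⟩ := hcover z
      obtain ⟨g', hg'⟩ := hΦsurj g
      exact ⟨Quot.mk _ (g', ⟨b, hbB⟩), by rw [hΨ, hg', hgb]⟩
end

section
/- Let X be a proper geodesic space and G ≤ Iso(X) a discrete group with diam(X/G) ≤ D. Then for any point p in the quotient space X/[G,G] there exist elements g₁,…,gₙ of the abelianization G^{ab} = G/[G,G] (acting naturally on X/[G,G]) such that: d(g·p, p) ≥ D for every non-identity g in the subgroup generated by g₁,…,gₙ; d(g_j·p, p) ≤ 2D for each j; and {g₁,…,gₙ} is a basis of the real vector space G^{ab} ⊗ ℝ. -/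
open TensorProduct

/-- The quotient pseudo-distance on `X/[G,G]`: `dq x y = inf_{h ∈ [G,G]} d(x, h y)`. -/
noncomputable def dq (X : Type) [MetricSpace X] (G : Subgroup (X ≃ᵢ X)) (x y : X) : ℝ :=
  sInf {d : ℝ | ∃ h : ↥G, h ∈ commutator ↥G ∧ d = dist x (((h : ↥G) : X ≃ᵢ X) y)}

namespace Stmt12Aux



lemma isLeast_of_finite_sublevels {S : Set ℝ} (hne : S.Nonempty)
    (hfin : ∀ r, (S ∩ Set.Iic r).Finite) : IsLeast S (sInf S) := by
  obtain ⟨s₀, hs₀⟩ := hne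
  obtain ⟨m, hmT, hmin⟩ := Set.exists_min_image _ id (hfin s₀) ⟨s₀, hs₀, Set.mem_Iic.2 (le_refl _)⟩
  have hlb : ∀ x ∈ S, m ≤ x := by
    intro x hx
    by_cases hxs : x ≤ s₀
    · exact hmin x ⟨hx, hxs⟩
    · exact le_trans (hmin s₀ ⟨hs₀, Set.mem_Iic.2 (le_refl _)⟩) (le_of_not_ge hxs)
  have hL : IsLeast S m := ⟨hmT.1, hlb⟩
  rwa [hL.csInf_eq]

variable {X : Type} [MetricSpace X] {G : Subgroup (X ≃ᵢ X)}

noncomputable def NH (G : Subgroup (X ≃ᵢ X)) (p : X) (H : Subgroup ↥G) (γ : ↥G) : ℝ :=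
  sInf {d : ℝ | ∃ h : ↥G, h ∈ H ∧ d = dist ((γ : X ≃ᵢ X) p) (((h : ↥G) : X ≃ᵢ X) p)}

section
variable (p : X) {H : Subgroup ↥G}

lemma dist_p_eq (γ h : ↥G) :
    dist (((γ⁻¹ * h : ↥G) : X ≃ᵢ X) p) p = dist ((γ : X ≃ᵢ X) p) ((h : X ≃ᵢ X) p) := by
  have h1 : (((γ⁻¹ * h : ↥G)) : X ≃ᵢ X) p = ((γ⁻¹ : ↥G) : X ≃ᵢ X) ((h : X ≃ᵢ X) p) := by simp
  have h2 : ((γ⁻¹ : ↥G) : X ≃ᵢ X) ((γ : X ≃ᵢ X) p) = p := by simp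
  calc dist (((γ⁻¹ * h : ↥G) : X ≃ᵢ X) p) p
      = dist (((γ⁻¹ : ↥G) : X ≃ᵢ X) ((h : X ≃ᵢ X) p)) (((γ⁻¹ : ↥G) : X ≃ᵢ X) ((γ : X ≃ᵢ X) p)) := by
        rw [h1, h2]
    _ = dist ((h : X ≃ᵢ X) p) ((γ : X ≃ᵢ X) p) := ((γ⁻¹ : ↥G) : X ≃ᵢ X).dist_eq _ _
    _ = dist ((γ : X ≃ᵢ X) p) ((h : X ≃ᵢ X) p) := dist_comm _ _

lemma NH_isLeast (hdisc : ∀ (x : X) (r : ℝ), {g : ↥G | dist ((g : X ≃ᵢ X) x) x ≤ r}.Finite)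
    (γ : ↥G) :
    IsLeast {d : ℝ | ∃ h : ↥G, h ∈ H ∧ d = dist ((γ : X ≃ᵢ X) p) (((h : ↥G) : X ≃ᵢ X) p)}
      (NH G p H γ) := by
  refine isLeast_of_finite_sublevels ⟨_, 1, H.one_mem, rfl⟩ (fun r => ?_)
  apply Set.Finite.subset
    (Set.Finite.image (fun u : ↥G => dist ((γ : X ≃ᵢ X) p) (((γ * u : ↥G) : X ≃ᵢ X) p))
      (hdisc p r))
  rintro d ⟨⟨h, hh, rfl⟩, hdr⟩
  refine ⟨γ⁻¹ * h, ?_, ?_⟩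
  · show dist (((γ⁻¹ * h : ↥G) : X ≃ᵢ X) p) p ≤ r
    rw [dist_p_eq]; exact hdr
  · show dist ((γ : X ≃ᵢ X) p) (((γ * (γ⁻¹ * h) : ↥G) : X ≃ᵢ X) p) = _
    have : γ * (γ⁻¹ * h) = h := by group
    rw [this]

lemma NH_attained (hdisc : ∀ (x : X) (r : ℝ), {g : ↥G | dist ((g : X ≃ᵢ X) x) x ≤ r}.Finite)
    (γ : ↥G) :
    ∃ h : ↥G, h ∈ H ∧ NH G p H γ = dist ((γ : X ≃ᵢ X) p) ((h : X ≃ᵢ X) p) :=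
  (NH_isLeast p hdisc γ).1

end

section
variable (p : X) {H : Subgroup ↥G}
variable (hdisc : ∀ (x : X) (r : ℝ), {g : ↥G | dist ((g : X ≃ᵢ X) x) x ≤ r}.Finite)

include hdisc in
lemma NH_le'0 : True := trivial

lemma NH_le' (γ : ↥G) {h : ↥G} (hh : h ∈ H) :
    NH G p H γ ≤ dist ((γ : X ≃ᵢ X) p) ((h : X ≃ᵢ X) p) :=
  csInf_le ⟨0, by rintro d ⟨h', _, rfl⟩; positivity⟩ ⟨h, hh, rfl⟩

lemma disp_inv (u : ↥G) :
    dist (((u⁻¹ : ↥G) : X ≃ᵢ X) p) p = dist ((u : X ≃ᵢ X) p) p := by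
  have h2 : ((u⁻¹ : ↥G) : X ≃ᵢ X) ((u : X ≃ᵢ X) p) = p := by simp
  calc dist (((u⁻¹ : ↥G) : X ≃ᵢ X) p) p
      = dist (((u⁻¹ : ↥G) : X ≃ᵢ X) p) (((u⁻¹ : ↥G) : X ≃ᵢ X) ((u : X ≃ᵢ X) p)) := by rw [h2]
    _ = dist p ((u : X ≃ᵢ X) p) := ((u⁻¹ : ↥G) : X ≃ᵢ X).dist_eq _ _
    _ = _ := dist_comm _ _

/-- compare distances by normalising to displacements -/
lemma dist_orbit_eq_of_group_eq (u w u' w' : ↥G) (hrel : u⁻¹ * w = u'⁻¹ * w') :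
    dist ((u : X ≃ᵢ X) p) ((w : X ≃ᵢ X) p) = dist ((u' : X ≃ᵢ X) p) ((w' : X ≃ᵢ X) p) := by
  rw [← dist_p_eq p u w, ← dist_p_eq p u' w', hrel]

include hdisc in
lemma NH_le_NH (γ δ : ↥G)
    (hmap : ∀ h : ↥G, h ∈ H → ∃ h' : ↥G, h' ∈ H ∧
      dist ((δ : X ≃ᵢ X) p) ((h' : X ≃ᵢ X) p) ≤ dist ((γ : X ≃ᵢ X) p) ((h : X ≃ᵢ X) p)) :
    NH G p H δ ≤ NH G p H γ := by
  obtain ⟨h, hh, heq⟩ := NH_attained p hdisc γ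
  obtain ⟨h', hh', hle⟩ := hmap h hh
  calc NH G p H δ ≤ _ := NH_le' p δ hh'
    _ ≤ _ := hle
    _ = NH G p H γ := heq.symm

lemma conj_mem_of_comm_le (hH : commutator ↥G ≤ H) (g : ↥G) {h : ↥G} (hh : h ∈ H) :
    g * h * g⁻¹ ∈ H := by
  have hc : g * h * g⁻¹ * h⁻¹ ∈ commutator ↥G := by
    rw [commutator_def]
    exact Subgroup.commutator_mem_commutator (Subgroup.mem_top g) (Subgroup.mem_top h)
  have : g * h * g⁻¹ = g * h * g⁻¹ * h⁻¹ * h := by group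
  rw [this]
  exact H.mul_mem (hH hc) hh

include hdisc in
lemma NH_left_inv {h₀ : ↥G} (hh₀ : h₀ ∈ H) (γ : ↥G) :
    NH G p H (h₀ * γ) = NH G p H γ := by
  have key : ∀ (c : ↥G), c ∈ H → ∀ δ : ↥G, NH G p H (c * δ) ≤ NH G p H δ := by
    intro c hc δ
    apply NH_le_NH p hdisc
    intro h hh
    refine ⟨c * h, H.mul_mem hc hh, le_of_eq ?_⟩
    exact dist_orbit_eq_of_group_eq p _ _ _ _ (by group)
  apply le_antisymm (key h₀ hh₀ γ)
  have := key h₀⁻¹ (H.inv_mem hh₀) (h₀ * γ)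
  rwa [show h₀⁻¹ * (h₀ * γ) = γ by group] at this

include hdisc in
lemma NH_right_inv (hH : commutator ↥G ≤ H) {h₀ : ↥G} (hh₀ : h₀ ∈ H) (γ : ↥G) :
    NH G p H (γ * h₀) = NH G p H γ := by
  have key : ∀ (c : ↥G), c ∈ H → ∀ δ : ↥G, NH G p H (δ * c) ≤ NH G p H δ := by
    intro c hc δ
    apply NH_le_NH p hdisc
    intro h hh
    refine ⟨δ * c * δ⁻¹ * h, H.mul_mem (conj_mem_of_comm_le hH δ hc) hh, le_of_eq ?_⟩
    exact dist_orbit_eq_of_group_eq p _ _ _ _ (by group)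
  apply le_antisymm (key h₀ hh₀ γ)
  have := key h₀⁻¹ (H.inv_mem hh₀) (γ * h₀)
  rwa [show γ * h₀ * h₀⁻¹ = γ by group] at this

include hdisc in
lemma NH_inv (hH : commutator ↥G ≤ H) (γ : ↥G) :
    NH G p H γ⁻¹ = NH G p H γ := by
  have key : ∀ δ : ↥G, NH G p H δ⁻¹ ≤ NH G p H δ := by
    intro δ
    apply NH_le_NH p hdisc
    intro h hh
    refine ⟨δ⁻¹ * h⁻¹ * δ, ?_, le_of_eq ?_⟩
    · have := conj_mem_of_comm_le hH δ⁻¹ (H.inv_mem hh)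
      rwa [show δ⁻¹ * h⁻¹ * δ⁻¹⁻¹ = δ⁻¹ * h⁻¹ * δ by group] at this
    · rw [← dist_p_eq p δ⁻¹ (δ⁻¹ * h⁻¹ * δ), ← dist_p_eq p δ h]
      rw [show (δ⁻¹)⁻¹ * (δ⁻¹ * h⁻¹ * δ) = (δ⁻¹ * h)⁻¹ by group]
      exact disp_inv p _
  apply le_antisymm (key γ)
  have := key γ⁻¹
  rwa [inv_inv] at this

include hdisc in
lemma NH_subadd (hH : commutator ↥G ≤ H) (γ₁ γ₂ : ↥G) :
    NH G p H (γ₁ * γ₂) ≤ NH G p H γ₁ + NH G p H γ₂ := by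
  obtain ⟨h₁, hh₁, heq₁⟩ := NH_attained p hdisc γ₁
  obtain ⟨h₂, hh₂, heq₂⟩ := NH_attained p hdisc γ₂
  have hmem : γ₁ * h₂ * γ₁⁻¹ * h₁ ∈ H := H.mul_mem (conj_mem_of_comm_le hH γ₁ hh₂) hh₁
  calc NH G p H (γ₁ * γ₂) ≤ dist (((γ₁ * γ₂ : ↥G) : X ≃ᵢ X) p)
        (((γ₁ * h₂ * γ₁⁻¹ * h₁ : ↥G) : X ≃ᵢ X) p) := NH_le' p _ hmem
    _ ≤ dist (((γ₁ * γ₂ : ↥G) : X ≃ᵢ X) p) (((γ₁ * h₂ : ↥G) : X ≃ᵢ X) p)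
        + dist (((γ₁ * h₂ : ↥G) : X ≃ᵢ X) p) (((γ₁ * h₂ * γ₁⁻¹ * h₁ : ↥G) : X ≃ᵢ X) p) :=
      dist_triangle _ _ _
    _ = dist ((γ₂ : X ≃ᵢ X) p) ((h₂ : X ≃ᵢ X) p)
        + dist ((γ₁ : X ≃ᵢ X) p) ((h₁ : X ≃ᵢ X) p) := by
      rw [dist_orbit_eq_of_group_eq p (γ₁ * γ₂) (γ₁ * h₂) γ₂ h₂ (by group),
        dist_orbit_eq_of_group_eq p (γ₁ * h₂) (γ₁ * h₂ * γ₁⁻¹ * h₁) γ₁ h₁ (by group)]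
    _ = NH G p H γ₁ + NH G p H γ₂ := by rw [← heq₁, ← heq₂]; ring

include hdisc in
lemma NH_anti {H' : Subgroup ↥G} (hHH' : H ≤ H') (γ : ↥G) :
    NH G p H' γ ≤ NH G p H γ := by
  obtain ⟨h, hh, heq⟩ := NH_attained (H := H) p hdisc γ
  calc NH G p H' γ ≤ _ := NH_le' p γ (hHH' hh)
    _ = NH G p H γ := heq.symm

end

-- ===== span machinery =====
section spanstuff
variable (p : X) (D : ℝ)

noncomputable def vmv (G : Subgroup (X ≃ᵢ X)) (g : ↥G) :
    ℝ ⊗[ℤ] Additive (Abelianization ↥G) :=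
  (1 : ℝ) ⊗ₜ[ℤ] Additive.ofMul (Abelianization.of g)

lemma vmv_mul (g h : ↥G) : vmv G (g * h) = vmv G g + vmv G h := by
  simp only [vmv, map_mul]
  rw [show Additive.ofMul (Abelianization.of g * Abelianization.of h)
      = Additive.ofMul (Abelianization.of g) + Additive.ofMul (Abelianization.of h) from rfl,
    TensorProduct.tmul_add]

/-- the ℝ-span of the image of the short elements is everything -/
lemma span_short_aux (hgeo : IsGeodesicSpace X) (hD : 0 < D)
    (hdiam : ∀ x y : X, ∀ ε > (0 : ℝ), ∃ g ∈ G, dist x (g y) < D + ε)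
    {ε : ℝ} (hε : 0 < ε) :
    ∀ (n : ℕ) (γ : ↥G), dist ((γ : X ≃ᵢ X) p) p ≤ 2*D + 4*ε + n*ε →
      vmv G γ ∈ Submodule.span ℝ
        (vmv G '' {δ : ↥G | dist ((δ : X ≃ᵢ X) p) p ≤ 2*D + 4*ε}) := by
  intro n
  induction n with
  | zero =>
    intro γ hγ
    exact Submodule.subset_span ⟨γ, by simpa using hγ, rfl⟩
  | succ n ih =>
    intro γ hγ
    by_cases hsmall : dist ((γ : X ≃ᵢ X) p) p ≤ 2*D + 4*ε + n*ε
    · exact ih γ hsmall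
    push_neg at hsmall
    set L := dist ((γ : X ≃ᵢ X) p) p with hL
    have hLpos : 0 ≤ L := dist_nonneg
    -- geodesic from p to γ p
    obtain ⟨f, hf0, hf1, hfd⟩ := hgeo p ((γ : X ≃ᵢ X) p)
    have hdist : dist p ((γ : X ≃ᵢ X) p) = L := dist_comm _ _
    set x := f (L/2) with hx
    have hmem : L/2 ∈ Set.Icc (0:ℝ) (dist p ((γ : X ≃ᵢ X) p)) := by
      rw [hdist]; constructor <;> [positivity; linarith]
    have hmem0 : (0:ℝ) ∈ Set.Icc (0:ℝ) (dist p ((γ : X ≃ᵢ X) p)) := by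
      rw [hdist]; exact ⟨le_refl _, by linarith⟩
    have hmemL : dist p ((γ : X ≃ᵢ X) p) ∈ Set.Icc (0:ℝ) (dist p ((γ : X ≃ᵢ X) p)) := by
      rw [hdist]; constructor <;> [linarith; linarith]
    have hxp : dist x p = L/2 := by
      have := hfd (L/2) hmem 0 hmem0
      rw [hf0] at this; rw [hx, this]; rw [abs_of_nonneg (by linarith)]; ring
    have hxγ : dist x ((γ : X ≃ᵢ X) p) = L/2 := by
      have := hfd (L/2) hmem (dist p ((γ : X ≃ᵢ X) p)) hmemL
      rw [hf1] at this; rw [hx, this, hdist, abs_of_nonpos (by linarith)]; ring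
    -- group element near the midpoint
    obtain ⟨g₀, hg₀G, hg₀⟩ := hdiam x p ε hε
    set h : ↥G := ⟨g₀, hg₀G⟩ with hh
    have hg₀' : dist x ((h : X ≃ᵢ X) p) < D + ε := hg₀
    have hpiece1 : dist ((h : X ≃ᵢ X) p) p < D + ε + L/2 := by
      calc dist ((h : X ≃ᵢ X) p) p ≤ dist ((h : X ≃ᵢ X) p) x + dist x p := dist_triangle _ _ _
        _ < (D + ε) + L/2 := by rw [dist_comm ((h : X ≃ᵢ X) p) x]; linarith [hxp]
    have hpiece2 : dist (((h⁻¹ * γ : ↥G) : X ≃ᵢ X) p) p < L/2 + D + ε := by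
      rw [dist_p_eq p h γ]
      calc dist ((h : X ≃ᵢ X) p) ((γ : X ≃ᵢ X) p)
          ≤ dist ((h : X ≃ᵢ X) p) x + dist x ((γ : X ≃ᵢ X) p) := dist_triangle _ _ _
        _ < (D + ε) + L/2 := by rw [dist_comm ((h : X ≃ᵢ X) p) x]; linarith [hxγ]
        _ = L/2 + D + ε := by ring
    have hbound : L/2 + D + ε ≤ 2*D + 4*ε + n*ε := by
      have hn : (0:ℝ) ≤ n := Nat.cast_nonneg n
      have hcast : L ≤ 2*D + 4*ε + (n+1)*ε := by push_cast at hγ; linarith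
      nlinarith
    have h1 : vmv G h ∈ _ := ih h (by linarith)
    have h2 : vmv G (h⁻¹ * γ) ∈ _ := ih (h⁻¹ * γ) (by linarith)
    have : γ = h * (h⁻¹ * γ) := by group
    rw [this, vmv_mul]
    exact Submodule.add_mem _ h1 h2

end spanstuff

section spantop
variable (p : X) (D : ℝ)

lemma vmv_smul_tmul (x : ℝ) (g : ↥G) :
    x ⊗ₜ[ℤ] (Additive.ofMul (Abelianization.of g)) = x • vmv G g := by
  rw [vmv, TensorProduct.smul_tmul', smul_eq_mul, mul_one]

lemma span_range_vmv : Submodule.span ℝ (Set.range (vmv G)) = ⊤ := by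
  rw [eq_top_iff]
  intro v _
  have h1 : v ∈ Submodule.span ℤ {t : ℝ ⊗[ℤ] Additive (Abelianization ↥G) |
      ∃ x y, x ⊗ₜ[ℤ] y = t} := by
    erw [TensorProduct.span_tmul_eq_top]; trivial
  refine Submodule.span_induction ?_ ?_ ?_ ?_ h1
  · rintro t ⟨x, y, rfl⟩
    obtain ⟨g, hg⟩ := QuotientGroup.mk'_surjective (commutator ↥G) (Additive.toMul y)
    have hy : Additive.ofMul (Abelianization.of g) = y := by
      rw [show Abelianization.of g = QuotientGroup.mk' (commutator ↥G) g from rfl, hg]; rfl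
    rw [show x ⊗ₜ[ℤ] y = x • vmv G g by rw [← vmv_smul_tmul, hy]]
    exact Submodule.smul_mem _ _ (Submodule.subset_span (Set.mem_range_self g))
  · exact Submodule.zero_mem _
  · intro a b _ _ ha hb; exact Submodule.add_mem _ ha hb
  · intro z a _ ha
    rw [← Int.cast_smul_eq_zsmul ℝ]
    exact Submodule.smul_mem _ _ ha

lemma span_short_top (hgeo : IsGeodesicSpace X) (hD : 0 < D)
    (hdiam : ∀ x y : X, ∀ ε > (0 : ℝ), ∃ g ∈ G, dist x (g y) < D + ε)
    {ε : ℝ} (hε : 0 < ε) :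
    Submodule.span ℝ (vmv G '' {δ : ↥G | dist ((δ : X ≃ᵢ X) p) p ≤ 2*D + 4*ε}) = ⊤ := by
  rw [eq_top_iff, ← span_range_vmv (G := G)]
  rw [Submodule.span_le]
  rintro v ⟨γ, rfl⟩
  obtain ⟨n, hn⟩ := exists_nat_ge ((dist ((γ : X ≃ᵢ X) p) p - 2*D - 4*ε)/ε)
  have : dist ((γ : X ≃ᵢ X) p) p ≤ 2*D + 4*ε + n*ε := by
    have := (div_le_iff₀ hε).1 hn
    linarith
  exact span_short_aux p D hgeo hD hdiam hε n γ this

lemma finiteDimensional_V (p : X)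
    (hdisc : ∀ (x : X) (r : ℝ), {g : ↥G | dist ((g : X ≃ᵢ X) x) x ≤ r}.Finite)
    (hgeo : IsGeodesicSpace X) (hD : 0 < D)
    (hdiam : ∀ x y : X, ∀ ε > (0 : ℝ), ∃ g ∈ G, dist x (g y) < D + ε) :
    FiniteDimensional ℝ (ℝ ⊗[ℤ] Additive (Abelianization ↥G)) := by
  have hfin : ({δ : ↥G | dist ((δ : X ≃ᵢ X) p) p ≤ 2*D + 4*1}).Finite := hdisc p _
  have hspan := span_short_top (G := G) p D hgeo hD hdiam (ε := 1) one_pos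
  exact Module.Finite.of_fg_top (Submodule.fg_def.mpr ⟨_, hfin.image _, hspan⟩)

lemma exists_short_outside
    (hdisc : ∀ (x : X) (r : ℝ), {g : ↥G | dist ((g : X ≃ᵢ X) x) x ≤ r}.Finite)
    (hgeo : IsGeodesicSpace X) (hD : 0 < D)
    (hdiam : ∀ x y : X, ∀ ε > (0 : ℝ), ∃ g ∈ G, dist x (g y) < D + ε)
    (W : Submodule ℝ (ℝ ⊗[ℤ] Additive (Abelianization ↥G))) (hW : W ≠ ⊤) :
    ∃ b : ↥G, dist ((b : X ≃ᵢ X) p) p ≤ 2*D ∧ vmv G b ∉ W := by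
  have key : ∀ ε : ℝ, 0 < ε → ∃ δ : ↥G, dist ((δ : X ≃ᵢ X) p) p ≤ 2*D + 4*ε ∧ vmv G δ ∉ W := by
    intro ε hε
    by_contra hcon
    push_neg at hcon
    apply hW
    rw [eq_top_iff, ← span_short_top (G := G) p D hgeo hD hdiam hε, Submodule.span_le]
    rintro v ⟨δ, hδ, rfl⟩
    exact hcon δ hδ
  have hCfin : ({δ : ↥G | dist ((δ : X ≃ᵢ X) p) p ≤ 2*D + 4 ∧ vmv G δ ∉ W}).Finite :=
    (hdisc p (2*D + 4)).subset (fun δ hδ => hδ.1)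
  have hCne : ({δ : ↥G | dist ((δ : X ≃ᵢ X) p) p ≤ 2*D + 4 ∧ vmv G δ ∉ W}).Nonempty := by
    obtain ⟨δ, h1, h2⟩ := key 1 one_pos
    exact ⟨δ, by norm_num at h1 ⊢; exact ⟨h1, h2⟩⟩
  obtain ⟨b, hbC, hbmin⟩ := Set.exists_min_image _ (fun δ : ↥G => dist ((δ : X ≃ᵢ X) p) p)
    hCfin hCne
  refine ⟨b, ?_, hbC.2⟩
  refine le_of_forall_pos_le_add (fun ζ hζ => ?_)
  obtain ⟨δ, hδ1, hδ2⟩ := key (min (ζ/4) 1) (by positivity)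
  have hδC : δ ∈ {δ : ↥G | dist ((δ : X ≃ᵢ X) p) p ≤ 2*D + 4 ∧ vmv G δ ∉ W} := by
    constructor
    · calc dist ((δ : X ≃ᵢ X) p) p ≤ 2*D + 4*(min (ζ/4) 1) := hδ1
        _ ≤ 2*D + 4 := by have := min_le_right (ζ/4) (1:ℝ); linarith
    · exact hδ2
  calc dist ((b : X ≃ᵢ X) p) p ≤ dist ((δ : X ≃ᵢ X) p) p := hbmin δ hδC
    _ ≤ 2*D + 4*(min (ζ/4) 1) := hδ1
    _ ≤ 2*D + ζ := by have := min_le_left (ζ/4) (1:ℝ); linarith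

end spantop

-- ===== more vmv lemmas =====
section vmvmore
lemma vmv_one : vmv G 1 = 0 := by simp [vmv]

lemma vmv_inv (g : ↥G) : vmv G g⁻¹ = - vmv G g := by
  simp only [vmv, map_inv]
  rw [show Additive.ofMul (Abelianization.of g)⁻¹ = - Additive.ofMul (Abelianization.of g)
    from rfl, TensorProduct.tmul_neg]

lemma vmv_zpow (g : ↥G) (m : ℤ) : vmv G (g ^ m) = (m : ℝ) • vmv G g := by
  simp only [vmv, map_zpow]
  rw [show Additive.ofMul ((Abelianization.of g) ^ m) = m • Additive.ofMul (Abelianization.of g)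
      from rfl, TensorProduct.tmul_smul, Int.cast_smul_eq_zsmul]

lemma vmv_pow (g : ↥G) (m : ℕ) : vmv G (g ^ m) = (m : ℝ) • vmv G g := by
  have := vmv_zpow g (m : ℤ)
  rw [zpow_natCast] at this
  rw [this]; norm_num

lemma smul_notmem {V : Type*} [AddCommGroup V] [Module ℝ V] {W : Submodule ℝ V}
    {v : V} (hv : v ∉ W) {c : ℝ} (hc : c ≠ 0) : c • v ∉ W := by
  intro hmem
  exact hv (by simpa [smul_smul, inv_mul_cancel₀ hc] using W.smul_mem c⁻¹ hmem)

noncomputable def WH (G : Subgroup (X ≃ᵢ X)) (H : Subgroup ↥G) :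
    Submodule ℝ (ℝ ⊗[ℤ] Additive (Abelianization ↥G)) :=
  Submodule.span ℝ (vmv G '' (H : Set ↥G))

lemma vmv_mem_WH {H : Subgroup ↥G} {h : ↥G} (hh : h ∈ H) : vmv G h ∈ WH G H :=
  Submodule.subset_span ⟨h, hh, rfl⟩

lemma WH_commutator : WH G (commutator ↥G) = ⊥ := by
  rw [WH, eq_bot_iff, Submodule.span_le]
  rintro v ⟨h, hh, rfl⟩
  have : Abelianization.of h = 1 := (QuotientGroup.eq_one_iff h).2 hh
  simp [vmv, this]

/-- in a normal-enough subgroup, powers of a left-translate agree up to H -/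
lemma pow_left_coset {H : Subgroup ↥G} (hH : commutator ↥G ≤ H)
    {h₀ : ↥G} (hh₀ : h₀ ∈ H) (γ : ↥G) :
    ∀ m : ℤ, ∃ h' : ↥G, h' ∈ H ∧ (h₀ * γ) ^ m = h' * γ ^ m := by
  have hnat : ∀ n : ℕ, ∃ h' : ↥G, h' ∈ H ∧ (h₀ * γ) ^ n = h' * γ ^ n := by
    intro n
    induction n with
    | zero => exact ⟨1, H.one_mem, by simp⟩
    | succ n ih =>
      obtain ⟨h', hh', heq⟩ := ih
      refine ⟨h' * (γ ^ n * h₀ * (γ ^ n)⁻¹), H.mul_mem hh' (conj_mem_of_comm_le hH _ hh₀), ?_⟩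
      rw [pow_succ, heq]
      group
  intro m
  rcases m with n | n
  · simpa using hnat n
  · obtain ⟨h', hh', heq⟩ := hnat (n+1)
    refine ⟨(γ ^ (n+1))⁻¹ * h'⁻¹ * (γ ^ (n+1)), ?_, ?_⟩
    · have := conj_mem_of_comm_le hH (γ^(n+1))⁻¹ (H.inv_mem hh')
      rwa [inv_inv] at this
    · rw [zpow_negSucc, heq, zpow_negSucc]
      group
end vmvmore

-- ===== the key selection lemma =====
section good
variable (p : X) (D : ℝ)

lemma exists_good
    (hdisc : ∀ (x : X) (r : ℝ), {g : ↥G | dist ((g : X ≃ᵢ X) x) x ≤ r}.Finite)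
    (hgeo : IsGeodesicSpace X) (hD : 0 < D)
    (hdiam : ∀ x y : X, ∀ ε > (0 : ℝ), ∃ g ∈ G, dist x (g y) < D + ε)
    {H : Subgroup ↥G} (hH : commutator ↥G ≤ H) (hW : WH G H ≠ ⊤) :
    ∃ a : ↥G, dist ((a : X ≃ᵢ X) p) p ≤ 2*D ∧ vmv G a ∉ WH G H ∧
      (∀ m : ℤ, m ≠ 0 → D ≤ NH G p H (a ^ m)) := by
  by_cases hP : ∃ b : ↥G, vmv G b ∉ WH G H ∧ NH G p H b < D
  · -- there is a short nontrivial element: take a power of it past the last short power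
    obtain ⟨b, hbW, hbN⟩ := hP
    set S : Set ℕ := {j : ℕ | 0 < j ∧ NH G p H (b ^ (j:ℕ)) < D} with hS
    have h1S : 1 ∈ S := ⟨one_pos, by rwa [pow_one]⟩
    -- attaining elements
    have hatt : ∀ j : ℕ, ∃ h : ↥G, h ∈ H ∧
        NH G p H (b ^ (j:ℕ)) = dist (((b ^ (j:ℕ) : ↥G) : X ≃ᵢ X) p) ((h : X ≃ᵢ X) p) :=
      fun j => NH_attained p hdisc _
    choose hj hjH hjEq using hatt
    have Sfin : S.Finite := by
      by_contra hinf
      have hmt : Set.MapsTo (fun j : ℕ => (b ^ (j:ℕ))⁻¹ * hj j) S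
          {u : ↥G | dist ((u : X ≃ᵢ X) p) p ≤ D} := by
        intro j hjS
        have : dist ((((b ^ (j:ℕ))⁻¹ * hj j : ↥G) : X ≃ᵢ X) p) p
            = dist (((b ^ (j:ℕ) : ↥G) : X ≃ᵢ X) p) ((hj j : X ≃ᵢ X) p) := dist_p_eq p _ _
        rw [Set.mem_setOf_eq, this, ← hjEq j]
        exact le_of_lt hjS.2
      obtain ⟨j, hjS, j', hj'S, hne, heq⟩ :=
        (show S.Infinite from hinf).exists_ne_map_eq_of_mapsTo hmt (hdisc p D)
      have hkey : (hj j') * (hj j)⁻¹ = b ^ ((j' : ℤ) - (j : ℤ)) := by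
        have e2 : hj j' = b ^ (j':ℕ) * ((b ^ (j':ℕ))⁻¹ * hj j') := by group
        rw [e2, ← heq]
        rw [show ((j':ℤ) - (j:ℤ)) = (j':ℤ) + (-(j:ℤ)) by ring, zpow_add, zpow_natCast,
          zpow_neg, zpow_natCast]
        group
      have hmemH : b ^ ((j' : ℤ) - (j : ℤ)) ∈ H := by
        rw [← hkey]; exact H.mul_mem (hjH j') (H.inv_mem (hjH j))
      have : vmv G (b ^ ((j' : ℤ) - (j : ℤ))) ∈ WH G H := vmv_mem_WH hmemH
      rw [vmv_zpow] at this
      have hc0 : ((((j' : ℤ) - (j : ℤ)) : ℤ) : ℝ) ≠ 0 := by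
        simp only [ne_eq, Int.cast_eq_zero, sub_eq_zero]
        exact_mod_cast fun hjj => hne (by exact_mod_cast hjj.symm)
      exact smul_notmem hbW hc0 this
    -- J := the largest short power
    obtain ⟨J, hJS, hJmax⟩ := Set.exists_max_image S id Sfin ⟨1, h1S⟩
    have keyNat : ∀ k : ℕ, J < k → D ≤ NH G p H (b ^ (k:ℕ)) := by
      intro k hk
      by_contra hlt
      push_neg at hlt
      have : k ∈ S := ⟨lt_of_le_of_lt (Nat.zero_le J) hk, hlt⟩
      exact absurd (hJmax k this) (not_le.mpr hk)
    set a₀ : ↥G := b ^ (J+1 : ℕ) with ha₀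
    have hNa₀ : NH G p H a₀ < 2*D := by
      have : NH G p H a₀ ≤ NH G p H (b ^ (J:ℕ)) + NH G p H b := by
        rw [ha₀, pow_succ]
        exact NH_subadd p hdisc hH _ _
      have hJlt : NH G p H (b ^ (J:ℕ)) < D := hJS.2
      linarith
    obtain ⟨hst, hstH, hstEq⟩ := NH_attained (H := H) p hdisc a₀
    set a : ↥G := hst⁻¹ * a₀ with ha
    have hdista : dist ((a : X ≃ᵢ X) p) p = NH G p H a₀ := by
      rw [ha, dist_p_eq p hst a₀, dist_comm, ← hstEq]
    have keyZ : ∀ m : ℤ, m ≠ 0 → D ≤ NH G p H (b ^ (((J:ℤ)+1) * m)) := by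
      have keyZpos : ∀ m : ℤ, 0 < m → D ≤ NH G p H (b ^ (((J:ℤ)+1) * m)) := by
        intro m hm
        have hcast : b ^ (((J:ℤ)+1) * m) = b ^ (((J+1) * m.toNat : ℕ)) := by
          rw [← zpow_natCast b ((J+1) * m.toNat)]
          congr 1
          push_cast [Int.toNat_of_nonneg (le_of_lt hm)]
          ring
        rw [hcast]
        apply keyNat
        calc J < J + 1 := Nat.lt_succ_self J
          _ = (J+1) * 1 := (mul_one _).symm
          _ ≤ (J+1) * m.toNat := Nat.mul_le_mul_left _ (by omega)
      intro m hm
      rcases lt_or_gt_of_ne hm with hneg | hpos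
      · have : b ^ (((J:ℤ)+1) * m) = (b ^ (((J:ℤ)+1) * (-m)))⁻¹ := by
          rw [← zpow_neg]; congr 1; ring
        rw [this, NH_inv p hdisc hH]
        exact keyZpos (-m) (by omega)
      · exact keyZpos m hpos
    refine ⟨a, ?_, ?_, ?_⟩
    · rw [hdista]; linarith
    · rw [ha, vmv_mul, vmv_inv]
      intro hmem
      have h1 : vmv G hst ∈ WH G H := vmv_mem_WH hstH
      have h2 : vmv G a₀ ∈ WH G H := by
        have := (WH G H).add_mem h1 hmem
        simpa using this
      rw [ha₀, vmv_pow] at h2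
      exact smul_notmem hbW (by positivity) h2
    · intro m hm
      obtain ⟨h', hh', heqm⟩ := pow_left_coset hH (H.inv_mem hstH) a₀ m
      rw [ha, heqm, NH_left_inv p hdisc hh']
      have : a₀ ^ m = b ^ (((J:ℤ)+1) * m) := by
        rw [ha₀, ← zpow_natCast b (J+1), ← zpow_mul,
          show ((J+1 : ℕ) : ℤ) * m = ((J:ℤ)+1)*m by push_cast; ring]
      rw [this]
      exact keyZ m hm
  · push_neg at hP
    obtain ⟨b, hb1, hb2⟩ := exists_short_outside p D hdisc hgeo hD hdiam (WH G H) hW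
    refine ⟨b, hb1, hb2, fun m hm => ?_⟩
    apply hP
    rw [vmv_zpow]
    exact smul_notmem hb2 (by exact_mod_cast hm)

end good

-- ===== ordered products and the recursion =====
section recursion
variable (p : X) (D : ℝ)

noncomputable def wprod {k : ℕ} (a : Fin k → ↥G) (m : Fin k → ℤ) : ↥G :=
  (List.ofFn (fun j => (a j) ^ (m j))).prod

lemma wprod_cons {k : ℕ} (x : ↥G) (a : Fin k → ↥G) (m : Fin (k+1) → ℤ) :
    wprod (Fin.cons x a) m = x ^ (m 0) * wprod a (fun j : Fin k => m j.succ) := by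
  rw [wprod, List.ofFn_succ]
  simp only [Fin.cons_zero, Fin.cons_succ, List.prod_cons]
  rfl

lemma wprod_zero {k : ℕ} (a : Fin k → ↥G) : wprod a (fun _ => (0:ℤ)) = 1 := by
  rw [wprod]
  apply List.prod_eq_one
  intro x hx
  obtain ⟨j, rfl⟩ := List.mem_ofFn.1 hx
  exact zpow_zero _

lemma of_wprod {k : ℕ} (a : Fin k → ↥G) (m : Fin k → ℤ) :
    Abelianization.of (wprod a m) = ∏ j : Fin k, (Abelianization.of (a j)) ^ (m j) := by
  rw [wprod, map_list_prod, List.map_ofFn]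
  rw [show (⇑Abelianization.of ∘ fun j => a j ^ m j)
      = fun j => (Abelianization.of (a j)) ^ (m j) by
    funext j; simp [Function.comp, map_zpow]]
  rw [List.prod_ofFn]

lemma WH_sup {H : Subgroup ↥G} (a : ↥G) :
    WH G (H ⊔ Subgroup.closure {a}) = WH G H ⊔ Submodule.span ℝ {vmv G a} := by
  apply le_antisymm
  · rw [WH, Submodule.span_le]
    rintro v ⟨h, hh, rfl⟩
    set K : Subgroup ↥G :=
      { carrier := {g : ↥G | vmv G g ∈ WH G H ⊔ Submodule.span ℝ {vmv G a}}
        one_mem' := by simp [vmv_one]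
        mul_mem' := by
          intro x y hx hy
          simp only [Set.mem_setOf_eq, vmv_mul] at *
          exact Submodule.add_mem _ hx hy
        inv_mem' := by
          intro x hx
          simp only [Set.mem_setOf_eq, vmv_inv] at *
          exact Submodule.neg_mem _ hx } with hK
    have hle : H ⊔ Subgroup.closure {a} ≤ K := by
      apply sup_le
      · intro g hg
        exact Submodule.mem_sup_left (vmv_mem_WH hg)
      · rw [Subgroup.closure_le]
        rintro g (rfl : g = a)
        exact Submodule.mem_sup_right (Submodule.subset_span rfl)
    exact hle hh
  · apply sup_le
    · rw [WH, WH, Submodule.span_le]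
      rintro v ⟨h, hh, rfl⟩
      exact Submodule.subset_span ⟨h, le_sup_left (a := H) hh, rfl⟩
    · rw [Submodule.span_le]
      rintro v (rfl : v = vmv G a)
      exact Submodule.subset_span ⟨a, le_sup_right (b := Subgroup.closure {a})
        (Subgroup.subset_closure rfl), rfl⟩

lemma rec_main
    (hdisc : ∀ (x : X) (r : ℝ), {g : ↥G | dist ((g : X ≃ᵢ X) x) x ≤ r}.Finite)
    (hgeo : IsGeodesicSpace X) (hD : 0 < D)
    (hdiam : ∀ x y : X, ∀ ε > (0 : ℝ), ∃ g ∈ G, dist x (g y) < D + ε) :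
    ∀ (n : ℕ) (H : Subgroup ↥G), commutator ↥G ≤ H →
      Module.finrank ℝ (ℝ ⊗[ℤ] Additive (Abelianization ↥G)) - Module.finrank ℝ (WH G H) ≤ n →
      ∃ (k : ℕ) (a : Fin k → ↥G),
        (∀ j, dist ((a j : X ≃ᵢ X) p) p ≤ 2*D) ∧
        (∀ m : Fin k → ℤ, m ≠ 0 → D ≤ NH G p H (wprod a m)) ∧
        (WH G H ⊔ Submodule.span ℝ (Set.range (fun j => vmv G (a j))) = ⊤) ∧
        (∀ c : Fin k → ℝ, (∑ j, c j • vmv G (a j)) ∈ WH G H → c = 0) := by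
  haveI hFD : FiniteDimensional ℝ (ℝ ⊗[ℤ] Additive (Abelianization ↥G)) :=
    finiteDimensional_V D p hdisc hgeo hD hdiam
  have base : ∀ H : Subgroup ↥G, WH G H = ⊤ →
      ∃ (k : ℕ) (a : Fin k → ↥G),
        (∀ j, dist ((a j : X ≃ᵢ X) p) p ≤ 2*D) ∧
        (∀ m : Fin k → ℤ, m ≠ 0 → D ≤ NH G p H (wprod a m)) ∧
        (WH G H ⊔ Submodule.span ℝ (Set.range (fun j => vmv G (a j))) = ⊤) ∧
        (∀ c : Fin k → ℝ, (∑ j, c j • vmv G (a j)) ∈ WH G H → c = 0) := by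
    intro H hWtop
    refine ⟨0, Fin.elim0, fun j => j.elim0, ?_, ?_, ?_⟩
    · exact fun m hm => absurd (funext fun j => j.elim0) hm
    · rw [hWtop, top_sup_eq]
    · intro c _; exact funext fun j => j.elim0
  intro n
  induction n with
  | zero =>
    intro H hH hrank
    by_cases hWtop : WH G H = ⊤
    · exact base H hWtop
    · exfalso
      have hlt : Module.finrank ℝ (WH G H)
          < Module.finrank ℝ (ℝ ⊗[ℤ] Additive (Abelianization ↥G)) :=
        Submodule.finrank_lt (lt_top_iff_ne_top.mpr hWtop).ne
      omega
  | succ n ih =>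
    intro H hH hrank
    by_cases hWtop : WH G H = ⊤
    · exact base H hWtop
    obtain ⟨a, haD, haW, haPow⟩ := exists_good p D hdisc hgeo hD hdiam hH hWtop
    set H' : Subgroup ↥G := H ⊔ Subgroup.closure {a} with hH'def
    have hH' : commutator ↥G ≤ H' := le_trans hH le_sup_left
    have hWH' : WH G H' = WH G H ⊔ Submodule.span ℝ {vmv G a} := WH_sup a
    have haH' : a ∈ H' := le_sup_right (b := Subgroup.closure {a}) (Subgroup.subset_closure rfl)
    have hlt : WH G H < WH G H' := by
      rw [hWH']
      refine lt_of_le_of_ne le_sup_left (fun hEq => haW ?_)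
      rw [hEq]
      exact Submodule.mem_sup_right (Submodule.subset_span rfl)
    have hrank' : Module.finrank ℝ (ℝ ⊗[ℤ] Additive (Abelianization ↥G))
        - Module.finrank ℝ (WH G H') ≤ n := by
      have h1 : Module.finrank ℝ (WH G H) < Module.finrank ℝ (WH G H') :=
        Submodule.finrank_lt_finrank_of_lt hlt
      have h2 : Module.finrank ℝ (WH G H')
          ≤ Module.finrank ℝ (ℝ ⊗[ℤ] Additive (Abelianization ↥G)) :=
        Submodule.finrank_le _
      omega
    obtain ⟨k, rest, Q1, Q2, Q3, Q4⟩ := ih H' hH' hrank'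
    refine ⟨k+1, Fin.cons a rest, ?_, ?_, ?_, ?_⟩
    · intro j
      refine Fin.cases ?_ ?_ j
      · simpa using haD
      · intro i; simpa using Q1 i
    · intro m hm
      rw [wprod_cons]
      by_cases hms : (fun j : Fin k => m j.succ) = (fun _ => (0:ℤ))
      · have hm0 : m 0 ≠ 0 := by
          intro h0
          apply hm
          funext j
          refine Fin.cases ?_ ?_ j
          · exact h0
          · intro i; exact congrFun hms i
        rw [hms, wprod_zero, mul_one]
        exact haPow (m 0) hm0
      · have hmsne : (fun j : Fin k => m j.succ) ≠ 0 := hms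
        have step1 : D ≤ NH G p H' (wprod rest (fun j : Fin k => m j.succ)) := Q2 _ hmsne
        have step2 : NH G p H' (a ^ (m 0) * wprod rest (fun j : Fin k => m j.succ))
            = NH G p H' (wprod rest (fun j : Fin k => m j.succ)) :=
          NH_left_inv p hdisc (Subgroup.zpow_mem H' haH' (m 0)) _
        calc D ≤ NH G p H' (a ^ (m 0) * wprod rest (fun j : Fin k => m j.succ)) := by
              rw [step2]; exact step1
          _ ≤ NH G p H (a ^ (m 0) * wprod rest (fun j : Fin k => m j.succ)) :=
              NH_anti p hdisc le_sup_left _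
    · have hrange : (Set.range (fun j : Fin (k+1) => vmv G (Fin.cons (α := fun _ => ↥G) a rest j)))
          = insert (vmv G a) (Set.range (fun j => vmv G (rest j))) := by
        rw [show (fun j : Fin (k+1) => vmv G (Fin.cons (α := fun _ => ↥G) a rest j))
            = Fin.cons (α := fun _ => ℝ ⊗[ℤ] Additive (Abelianization ↥G)) (vmv G a)
              (fun j => vmv G (rest j)) by
          funext j
          refine Fin.cases rfl (fun i => ?_) j
          simp only [Fin.cons_succ]]
        exact Fin.range_cons _ _
      rw [hrange, Submodule.span_insert, ← sup_assoc,
        show (ℝ ∙ (vmv G a)) = Submodule.span ℝ {vmv G a} from rfl, ← hWH']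
      exact Q3
    · intro c hc
      have hsum : (∑ j : Fin (k+1), c j • vmv G (Fin.cons (α := fun _ => ↥G) a rest j))
          = c 0 • vmv G a + ∑ j : Fin k, c j.succ • vmv G (rest j) := by
        rw [Fin.sum_univ_succ]
        simp
      have h2 : (∑ j : Fin k, c j.succ • vmv G (rest j)) ∈ WH G H' := by
        rw [hWH']
        have hx : (∑ j : Fin (k+1), c j • vmv G (Fin.cons (α := fun _ => ↥G) a rest j)) ∈
            WH G H ⊔ Submodule.span ℝ {vmv G a} := Submodule.mem_sup_left hc
        have hy : c 0 • vmv G a ∈ WH G H ⊔ Submodule.span ℝ {vmv G a} :=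
          Submodule.mem_sup_right (Submodule.smul_mem _ _ (Submodule.subset_span rfl))
        have := Submodule.sub_mem _ hx hy
        rwa [hsum, add_sub_cancel_left] at this
      have hzero : (fun j : Fin k => c j.succ) = 0 := Q4 _ h2
      have hc0 : c 0 = 0 := by
        by_contra hc0
        apply haW
        have : (∑ j : Fin (k+1), c j • vmv G (Fin.cons (α := fun _ => ↥G) a rest j)) = c 0 • vmv G a := by
          rw [hsum]
          have : ∀ j : Fin k, c j.succ = 0 := fun j => congrFun hzero j
          simp [this]
        rw [this] at hc
        simpa [smul_smul, inv_mul_cancel₀ hc0] using (WH G H).smul_mem (c 0)⁻¹ hc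
      funext j
      refine Fin.cases ?_ ?_ j
      · exact hc0
      · intro i; exact congrFun hzero i

end recursion

-- ===== final assembly =====
lemma dqX_eq_NH (p : X) (γ : ↥G) :
    dq X G ((γ : X ≃ᵢ X) p) p = NH G p (commutator ↥G) γ := rfl

theorem stmt12' (X : Type) [MetricSpace X] [ProperSpace X] (hgeo : IsGeodesicSpace X)
    (G : Subgroup (X ≃ᵢ X)) (D : ℝ) (hD : 0 < D)
    (hdisc : ∀ (x : X) (r : ℝ), {g : ↥G | dist ((g : X ≃ᵢ X) x) x ≤ r}.Finite)
    (hdiam : ∀ x y : X, ∀ ε > (0 : ℝ), ∃ g ∈ G, dist x (g y) < D + ε)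
    (p : X) :
    ∃ (k : ℕ) (g : Fin k → ↥G),
      (∀ γ ∈ Subgroup.closure (Set.range g),
        Abelianization.of γ ≠ 1 → D ≤ dq X G (((γ : ↥G) : X ≃ᵢ X) p) p) ∧
      (∀ j, dq X G (((g j : ↥G) : X ≃ᵢ X) p) p ≤ 2 * D) ∧
      ∃ b : Module.Basis (Fin k) ℝ (ℝ ⊗[ℤ] Additive (Abelianization ↥G)),
        ∀ j, b j = (1 : ℝ) ⊗ₜ[ℤ] Additive.ofMul (Abelianization.of (g j)) := by
  obtain ⟨k, a, P1, P2, P3, P4⟩ := rec_main p D hdisc hgeo hD hdiam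
    (Module.finrank ℝ (ℝ ⊗[ℤ] Additive (Abelianization ↥G))
      - Module.finrank ℝ (WH G (commutator ↥G)))
    (commutator ↥G) le_rfl le_rfl
  refine ⟨k, a, ?_, ?_, ?_⟩
  · intro γ hγ hγ1
    -- represent the abelianization image of γ as a power product
    have hrep : ∃ m : Fin k → ℤ,
        Abelianization.of γ = ∏ j : Fin k, (Abelianization.of (a j)) ^ (m j) := by
      refine Subgroup.closure_induction ?_ ?_ ?_ ?_ hγ
      · rintro x ⟨j₀, rfl⟩
        refine ⟨Pi.single j₀ 1, ?_⟩
        rw [Finset.prod_eq_single j₀]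
        · simp
        · intro j _ hj; simp [Pi.single_eq_of_ne hj]
        · intro h; exact absurd (Finset.mem_univ j₀) h
      · exact ⟨0, by simp⟩
      · rintro x y _ _ ⟨mx, hmx⟩ ⟨my, hmy⟩
        refine ⟨mx + my, ?_⟩
        rw [map_mul, hmx, hmy, ← Finset.prod_mul_distrib]
        congr 1; funext j; rw [Pi.add_apply, zpow_add]
      · rintro x _ ⟨mx, hmx⟩
        refine ⟨-mx, ?_⟩
        rw [map_inv, hmx, ← Finset.prod_inv_distrib]
        congr 1; funext j; rw [Pi.neg_apply, zpow_neg]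
    obtain ⟨m, hm⟩ := hrep
    have hmne : m ≠ 0 := by
      intro h0
      apply hγ1
      rw [hm, h0]
      simp
    have hofδ : Abelianization.of γ = Abelianization.of (wprod a m) := by
      rw [hm, of_wprod]
    have hcomm : γ⁻¹ * wprod a m ∈ commutator ↥G := by
      rwa [show (Abelianization.of γ = Abelianization.of (wprod a m)) ↔ _ from
        QuotientGroup.eq] at hofδ
    have heq : NH G p (commutator ↥G) γ = NH G p (commutator ↥G) (wprod a m) := by
      have := NH_right_inv p hdisc le_rfl hcomm γ
      rw [show γ * (γ⁻¹ * wprod a m) = wprod a m by group] at this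
      exact this.symm
    rw [dqX_eq_NH, heq]
    exact P2 m hmne
  · intro j
    rw [dqX_eq_NH]
    refine le_trans ?_ (P1 j)
    have h1 := NH_le' (H := commutator ↥G) p (a j) (Subgroup.one_mem _)
    simpa using h1
  · have hli : LinearIndependent ℝ (fun j => vmv G (a j)) := by
      rw [Fintype.linearIndependent_iff]
      intro c hc
      have : (∑ j, c j • vmv G (a j)) ∈ WH G (commutator ↥G) := by
        rw [WH_commutator, hc]; exact Submodule.zero_mem _
      exact fun i => congrFun (P4 c this) i
    have hsp : ⊤ ≤ Submodule.span ℝ (Set.range (fun j => vmv G (a j))) := by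
      rw [WH_commutator, bot_sup_eq] at P3
      rw [P3]
    refine ⟨Module.Basis.mk hli hsp, fun j => ?_⟩
    rw [Module.Basis.mk_apply]
    rfl


end Stmt12Aux

/-- **Gromov.** Let `X` be a proper geodesic space and `G ≤ Iso(X)` a discrete
group with `diam (X/G) ≤ D`. Then for any point `p` of `X/[G,G]` there are `g₁, …, g_k` in
`G^{ab}` with: `d(g p, p) ≥ D` for all non-identity `g` of the subgroup they generate,
`d(g_j p, p) ≤ 2D` for all `j`, and `{g₁, …, g_k}` is a basis of `G^{ab} ⊗ ℝ`. -/
theorem stmt12 (X : Type) [MetricSpace X] [ProperSpace X] (hgeo : IsGeodesicSpace X)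
    (G : Subgroup (X ≃ᵢ X)) (D : ℝ) (hD : 0 < D)
    (hdisc : ∀ (x : X) (r : ℝ), {g : ↥G | dist ((g : X ≃ᵢ X) x) x ≤ r}.Finite)
    (hdiam : ∀ x y : X, ∀ ε > (0 : ℝ), ∃ g ∈ G, dist x (g y) < D + ε)
    (p : X) :
    ∃ (k : ℕ) (g : Fin k → ↥G),
      (∀ γ ∈ Subgroup.closure (Set.range g),
        Abelianization.of γ ≠ 1 → D ≤ dq X G (((γ : ↥G) : X ≃ᵢ X) p) p) ∧
      (∀ j, dq X G (((g j : ↥G) : X ≃ᵢ X) p) p ≤ 2 * D) ∧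
      ∃ b : Module.Basis (Fin k) ℝ (ℝ ⊗[ℤ] Additive (Abelianization ↥G)),
        ∀ j, b j = (1 : ℝ) ⊗ₜ[ℤ] Additive.ofMul (Abelianization.of (g j)) := by
  exact Stmt12Aux.stmt12' X hgeo G D hD hdisc hdiam p
end

section
/- Let T be a finite symmetric defining set of ℤ^N (i.e., ℤ^N is presented with generating set T and relations {abc⁻¹ : a,b,c ∈ T, a+b=c in ℤ^N}). Let Γ̃ be the group generated by abstract symbols {t♯ : t ∈ T³} with relations a♯b♯ = c♯ whenever a,b,c ∈ T³ and a+b = c in ℤ^N. Then the natural homomorphism Γ̃ → ℤ^N sending t♯ ↦ t is an isomorphism. -/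
open Pointwise

/-- The multiplication-table relations on a subset `S` of `ℤ^N`:
`a♯ b♯ (c♯)⁻¹` whenever `a, b, c ∈ S` and `a + b = c`. -/
def latticeRels (N : ℕ) (S : Set (Fin N → ℤ)) : Set (FreeGroup ↥S) :=
  {w | ∃ a b c : ↥S, (a : Fin N → ℤ) + (b : Fin N → ℤ) = (c : Fin N → ℤ) ∧
    w = FreeGroup.of a * FreeGroup.of b * (FreeGroup.of c)⁻¹}

/-- In the presented group, the multiplication-table relations hold. -/
lemma latticeRels_hold {N : ℕ} {S : Set (Fin N → ℤ)} {a b c : ↥S}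
    (h : (a : Fin N → ℤ) + (b : Fin N → ℤ) = (c : Fin N → ℤ)) :
    (PresentedGroup.of a * PresentedGroup.of b : PresentedGroup (latticeRels N S)) =
      PresentedGroup.of c := by
  have hmem : (FreeGroup.of a * FreeGroup.of b * (FreeGroup.of c)⁻¹ : FreeGroup ↥S)
      ∈ Subgroup.normalClosure (latticeRels N S) :=
    Subgroup.subset_normalClosure ⟨a, b, c, h, rfl⟩
  have h1 : (PresentedGroup.mk (latticeRels N S))
      (FreeGroup.of a * FreeGroup.of b * (FreeGroup.of c)⁻¹) = 1 :=
    (QuotientGroup.eq_one_iff _).2 hmem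
  rw [map_mul, map_mul, map_inv] at h1
  have h2 : (PresentedGroup.of a * PresentedGroup.of b : PresentedGroup (latticeRels N S)) *
      (PresentedGroup.of c)⁻¹ = 1 := h1
  exact mul_inv_eq_one.mp h2

/-- If `T` is a finite symmetric defining set of `ℤ^N` (the presented group
on `T` with multiplication-table relations maps isomorphically onto `ℤ^N`), then the presented
group on `T³ = T + T + T` with the analogous relations also maps isomorphically onto `ℤ^N`. -/
theorem stmt19 (N : ℕ) (T : Set (Fin N → ℤ)) (hfin : T.Finite)
    (h0 : (0 : Fin N → ℤ) ∈ T) (hsymm : ∀ t ∈ T, -t ∈ T)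
    (hdef : ∃ Φ₀ : PresentedGroup (latticeRels N T) →* Multiplicative (Fin N → ℤ),
      (∀ t : ↥T, Φ₀ (PresentedGroup.of t) = Multiplicative.ofAdd (t : Fin N → ℤ)) ∧
        Function.Bijective Φ₀) :
    ∀ Φ : PresentedGroup (latticeRels N (T + T + T)) →* Multiplicative (Fin N → ℤ),
      (∀ t : ↥(T + T + T), Φ (PresentedGroup.of t) = Multiplicative.ofAdd (t : Fin N → ℤ)) →
        Function.Bijective Φ := by
  obtain ⟨Φ₀, hΦ₀, hbij⟩ := hdef
  set e : PresentedGroup (latticeRels N T) ≃* Multiplicative (Fin N → ℤ) :=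
    MulEquiv.ofBijective Φ₀ hbij with he
  intro Φ hΦ
  have hTS : ∀ t ∈ T, t ∈ T + T + T := by
    intro t ht
    have : t + 0 + 0 ∈ T + T + T := Set.add_mem_add (Set.add_mem_add ht h0) h0
    simpa using this
  -- θ : presented group on T+T+T → presented group on T
  have hθrels : ∀ r ∈ latticeRels N (T + T + T), FreeGroup.lift
      (fun s : ↥(T + T + T) => e.symm (Multiplicative.ofAdd (s : Fin N → ℤ))) r = 1 := by
    rintro r ⟨a, b, c, habc, rfl⟩
    rw [map_mul, map_mul, map_inv, FreeGroup.lift_apply_of, FreeGroup.lift_apply_of, FreeGroup.lift_apply_of]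
    rw [mul_inv_eq_one, ← map_mul]
    exact congrArg e.symm (congrArg Multiplicative.ofAdd habc)
  set θ : PresentedGroup (latticeRels N (T + T + T)) →* PresentedGroup (latticeRels N T) :=
    PresentedGroup.toGroup hθrels with hθ
  have hθof : ∀ s : ↥(T + T + T), θ (PresentedGroup.of s) =
      e.symm (Multiplicative.ofAdd (s : Fin N → ℤ)) := fun s => PresentedGroup.toGroup.of hθrels
  -- η : presented group on T → presented group on T+T+T
  have hηrels : ∀ r ∈ latticeRels N T, FreeGroup.lift
      (fun t : ↥T => (PresentedGroup.of ⟨(t : Fin N → ℤ), hTS t t.2⟩ :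
        PresentedGroup (latticeRels N (T + T + T)))) r = 1 := by
    rintro r ⟨a, b, c, habc, rfl⟩
    rw [map_mul, map_mul, map_inv, FreeGroup.lift_apply_of, FreeGroup.lift_apply_of, FreeGroup.lift_apply_of]
    rw [mul_inv_eq_one]
    exact latticeRels_hold habc
  set η : PresentedGroup (latticeRels N T) →* PresentedGroup (latticeRels N (T + T + T)) :=
    PresentedGroup.toGroup hηrels with hη
  have hηof : ∀ t : ↥T, η (PresentedGroup.of t) =
      (PresentedGroup.of ⟨(t : Fin N → ℤ), hTS t t.2⟩ :
        PresentedGroup (latticeRels N (T + T + T))) :=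
    fun t => PresentedGroup.toGroup.of hηrels
  -- θ ∘ η = id
  have hθη : θ.comp η = MonoidHom.id _ := by
    apply PresentedGroup.ext
    intro t
    simp only [MonoidHom.comp_apply, MonoidHom.id_apply, hηof, hθof]
    have : Multiplicative.ofAdd (t : Fin N → ℤ) = Φ₀ (PresentedGroup.of t) := (hΦ₀ t).symm
    rw [this]
    exact e.symm_apply_apply _
  -- η ∘ θ = id
  have hηθ : η.comp θ = MonoidHom.id _ := by
    apply PresentedGroup.ext
    intro s
    simp only [MonoidHom.comp_apply, MonoidHom.id_apply, hθof]
    obtain ⟨s, hs⟩ := s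
    obtain ⟨u, hu, t3, ht3, rfl⟩ := hs
    obtain ⟨t1, ht1, t2, ht2, rfl⟩ := hu
    have key : e.symm (Multiplicative.ofAdd (t1 + t2 + t3)) =
        PresentedGroup.of ⟨t1, ht1⟩ * PresentedGroup.of ⟨t2, ht2⟩ *
          PresentedGroup.of ⟨t3, ht3⟩ := by
      apply e.injective
      rw [e.apply_symm_apply]
      have : e (PresentedGroup.of (⟨t1, ht1⟩ : ↥T) * PresentedGroup.of ⟨t2, ht2⟩ *
          PresentedGroup.of ⟨t3, ht3⟩) = Φ₀ _ := rfl
      rw [this, map_mul, map_mul, hΦ₀, hΦ₀, hΦ₀]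
      rfl
    rw [key, map_mul, map_mul, hηof, hηof, hηof]
    have h12 : t1 + t2 ∈ T + T + T := by
      have : t1 + t2 + 0 ∈ T + T + T := Set.add_mem_add (Set.add_mem_add ht1 ht2) h0
      simpa using this
    have r1 : (PresentedGroup.of ⟨t1, hTS t1 ht1⟩ * PresentedGroup.of ⟨t2, hTS t2 ht2⟩ :
        PresentedGroup (latticeRels N (T + T + T))) = PresentedGroup.of ⟨t1 + t2, h12⟩ :=
      latticeRels_hold rfl
    have r2 : (PresentedGroup.of ⟨t1 + t2, h12⟩ * PresentedGroup.of ⟨t3, hTS t3 ht3⟩ :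
        PresentedGroup (latticeRels N (T + T + T))) = PresentedGroup.of ⟨t1 + t2 + t3,
          Set.add_mem_add (Set.add_mem_add ht1 ht2) ht3⟩ :=
      latticeRels_hold rfl
    rw [r1, r2]
  have hθbij : Function.Bijective θ := by
    constructor
    · intro x y hxy
      have h' := congrArg η hxy
      have hx : η (θ x) = x := congrFun (congrArg DFunLike.coe hηθ) x
      have hy : η (θ y) = y := congrFun (congrArg DFunLike.coe hηθ) y
      rwa [hx, hy] at h'
    · intro y
      exact ⟨η y, congrFun (congrArg DFunLike.coe hθη) y⟩
  have hΦeq : Φ = Φ₀.comp θ := by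
    apply PresentedGroup.ext
    intro s
    rw [MonoidHom.comp_apply, hθof, hΦ s]
    have : Φ₀ (e.symm (Multiplicative.ofAdd (s : Fin N → ℤ))) =
        e (e.symm (Multiplicative.ofAdd (s : Fin N → ℤ))) := rfl
    rw [this, e.apply_symm_apply]
  rw [hΦeq, MonoidHom.coe_comp]
  exact Function.Bijective.comp hbij hθbij
end
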